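/- arXiv:1203.1478 — 12 statements merged into one kernel-verified Lean document; each statement's English description precedes it below -/
import Mathlib

section
/- The Cauchy problem g' = 1/√(a∘g), g(0)=0 has a unique globally defined C² solution g : ℝ → ℝ that is strictly increasing, and g(s) → ±∞ as s → ±∞. -/
open Filter

theorem stmt_0 (a : ℝ → ℝ) (ha : ContDiff ℝ 1 a) (ν : ℝ) (hν : 0 < ν)
    (hab : ∀ s, ν ≤ a s) :
    ∃ g : ℝ → ℝ, (g 0 = 0 ∧ ∀ s, HasDerivAt g (1 / Real.sqrt (a (g s))) s) ∧
      ContDiff ℝ 2 g ∧ StrictMono g ∧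
      Tendsto g atTop atTop ∧ Tendsto g atBot atBot ∧
      ∀ g' : ℝ → ℝ, (g' 0 = 0 ∧ ∀ s, HasDerivAt g' (1 / Real.sqrt (a (g' s))) s) →
        g' = g := by
  have hapos : ∀ x, 0 < a x := fun x => lt_of_lt_of_le hν (hab x)
  have hsq : ∀ x, 0 < Real.sqrt (a x) := fun x => Real.sqrt_pos.2 (hapos x)
  have hcs : Continuous fun x => Real.sqrt (a x) :=
    Real.continuous_sqrt.comp ha.continuous
  set f : ℝ → ℝ := fun x => ∫ t in (0:ℝ)..x, Real.sqrt (a t) with hf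
  have hfd : ∀ x, HasDerivAt f (Real.sqrt (a x)) x := fun x =>
    intervalIntegral.integral_hasDerivAt_right (hcs.intervalIntegrable _ _)
      (hcs.stronglyMeasurableAtFilter _ _) hcs.continuousAt
  have hf0 : f 0 = 0 := intervalIntegral.integral_same
  have fmono : StrictMono f := strictMono_of_deriv_pos fun x => by
    rw [(hfd x).deriv]; exact hsq x
  have hsqν : 0 < Real.sqrt ν := Real.sqrt_pos.2 hν
  have hlow : ∀ x : ℝ, 0 ≤ x → Real.sqrt ν * x ≤ f x := by
    intro x hx
    have : ∫ t in (0:ℝ)..x, Real.sqrt ν ≤ f x := by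
      apply intervalIntegral.integral_mono_on hx (intervalIntegrable_const)
        (hcs.intervalIntegrable _ _)
      intro t _
      exact Real.sqrt_le_sqrt (hab t)
    simpa [mul_comm] using this
  have hhigh : ∀ x : ℝ, x ≤ 0 → f x ≤ Real.sqrt ν * x := by
    intro x hx
    have : ∫ t in x..(0:ℝ), Real.sqrt ν ≤ ∫ t in x..(0:ℝ), Real.sqrt (a t) := by
      apply intervalIntegral.integral_mono_on hx (intervalIntegrable_const)
        (hcs.intervalIntegrable _ _)
      intro t _
      exact Real.sqrt_le_sqrt (hab t)
    have h2 : f x = -∫ t in x..(0:ℝ), Real.sqrt (a t) :=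
      intervalIntegral.integral_symm x 0
    rw [h2]
    have h3 : (∫ t in x..(0:ℝ), Real.sqrt ν) = (0 - x) * Real.sqrt ν := by
      simp [smul_eq_mul]
    nlinarith [this]
  have ftop : Tendsto f atTop atTop := by
    apply tendsto_atTop_mono' atTop
      (by filter_upwards [eventually_ge_atTop (0:ℝ)] with x hx using hlow x hx)
    exact Tendsto.const_mul_atTop hsqν tendsto_id
  have fbot : Tendsto f atBot atBot := by
    apply tendsto_atBot_mono' atBot
      (by filter_upwards [eventually_le_atBot (0:ℝ)] with x hx using hhigh x hx)
    exact Tendsto.const_mul_atBot hsqν tendsto_id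
  have fcont : Continuous f := continuous_iff_continuousAt.2 fun x => (hfd x).continuousAt
  have fsurj : Function.Surjective f := Continuous.surjective fcont ftop fbot
  set e := StrictMono.orderIsoOfSurjective f fmono fsurj with he
  set g : ℝ → ℝ := fun x => e.symm x with hg
  have hgf : ∀ x, g (f x) = x := fun x =>
    StrictMono.orderIsoOfSurjective_symm_apply_self f fmono fsurj x
  have hfg : ∀ y, f (g y) = y := fun y =>
    StrictMono.orderIsoOfSurjective_self_symm_apply f fmono fsurj y
  have gcont : Continuous g := e.symm.continuous
  have hg0 : g 0 = 0 := by have := hgf 0; rwa [hf0] at this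
  have hgd : ∀ s, HasDerivAt g (1 / Real.sqrt (a (g s))) s := by
    intro s
    rw [one_div]
    exact HasDerivAt.of_local_left_inverse gcont.continuousAt (hfd (g s))
      (ne_of_gt (hsq (g s))) (Eventually.of_forall hfg)
  have gdiff : Differentiable ℝ g := fun s => (hgd s).differentiableAt
  have hderiv : deriv g = fun s => (Real.sqrt (a (g s)))⁻¹ := by
    funext s
    rw [(hgd s).deriv, one_div]
  have gC1 : ContDiff ℝ 1 g := by
    rw [contDiff_one_iff_deriv]
    refine ⟨gdiff, ?_⟩
    rw [hderiv]
    exact Continuous.inv₀ (hcs.comp gcont) fun s => ne_of_gt (hsq (g s))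
  have gC2 : ContDiff ℝ 2 g := by
    rw [show (2 : WithTop ℕ∞) = 1 + 1 from rfl, contDiff_succ_iff_deriv]
    refine ⟨gdiff, by norm_num, ?_⟩
    rw [hderiv]
    rw [contDiff_iff_contDiffAt]
    intro s
    refine ContDiffAt.inv ?_ (ne_of_gt (hsq (g s)))
    exact (Real.contDiffAt_sqrt (ne_of_gt (hapos (g s)))).comp s
      (ha.contDiffAt.comp s gC1.contDiffAt)
  have gmono : StrictMono g := e.symm.strictMono
  have gtop : Tendsto g atTop atTop :=
    tendsto_atTop_atTop_of_monotone gmono.monotone fun b => ⟨f b, (hgf b).ge⟩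
  have gbot : Tendsto g atBot atBot :=
    tendsto_atBot_atBot_of_monotone gmono.monotone fun b => ⟨f b, (hgf b).le⟩
  refine ⟨g, ⟨hg0, hgd⟩, gC2, gmono, gtop, gbot, ?_⟩
  rintro g' ⟨hg'0, hg'd⟩
  set h : ℝ → ℝ := fun s => f (g' s) - s with hh
  have hhd : ∀ s, HasDerivAt h 0 s := by
    intro s
    have h1 : HasDerivAt (fun s => f (g' s))
        (Real.sqrt (a (g' s)) * (1 / Real.sqrt (a (g' s)))) s :=
      (hfd (g' s)).comp s (hg'd s)
    have h2 := h1.sub (hasDerivAt_id s)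
    have h3 : Real.sqrt (a (g' s)) * (1 / Real.sqrt (a (g' s))) - 1 = 0 := by
      rw [mul_one_div_cancel (ne_of_gt (hsq (g' s)))]; ring
    rwa [h3] at h2
  have hconst : ∀ s, h s = h 0 :=
    fun s => is_const_of_deriv_eq_zero (fun x => (hhd x).differentiableAt)
      (fun x => (hhd x).deriv) s 0
  have hzero : ∀ s, f (g' s) = s := by
    intro s
    have := hconst s
    simp [hh, hg'0, hf0] at this
    linarith
  funext s
  rw [← hgf (g' s), hzero s]
end

section
/- If a(s)/s^k → a_∞ as s → +∞ for constants k > 0 and a_∞ > 0, then g(s)/s^{2/(k+2)} → g_∞ as s → +∞, where g_∞ = ((k+2)/(2√a_∞))^{2/(k+2)}, and consequently g⁻¹(t)/t^{(k+2)/2} → g_∞^{-(k+2)/2} as t → +∞. -/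
/-
Put `p = (k + 2) / 2`. Since `(g ^ p)' = p * g ^ (k / 2) / √(a ∘ g)`, the derivative of `g ^ p`
tends to `p / √aInf` as soon as `g → ∞`, and then so does `g ^ p / s`, by the mean value
inequality `f x ≤ f N + d * (x - N)` when `f' ≤ d` on `[N, ∞)`. Taking `p`-th roots gives the
first limit, and substituting `s = g⁻¹ t` and inverting gives the second. Finally `g → ∞`: a
bounded increasing `g` would converge to some `l`, and then `g' → 1 / √(a l) > 0` would force
`g s / s` to a positive limit.
-/

open Filter Topology Set

lemma le_add_mul_sub_of_hasDerivAt_le {f f' : ℝ → ℝ} {N d x : ℝ}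
    (hf : ∀ y ≥ N, HasDerivAt f (f' y) y) (hf' : ∀ y ≥ N, f' y ≤ d) (hx : N ≤ x) :
    f x ≤ f N + d * (x - N) := by
  have hderiv : ∀ y ≥ N, HasDerivAt (fun y => f y - d * y) (f' y - d) y := fun y hy => by
    simpa using (hf y hy).fun_sub ((hasDerivAt_id y).const_mul d)
  have hanti : AntitoneOn (fun y => f y - d * y) (Ici N) := by
    refine antitoneOn_of_hasDerivWithinAt_nonpos (f' := fun y => f' y - d) (convex_Ici N)
      (fun y hy => (hderiv y hy).continuousAt.continuousWithinAt) (fun y hy => ?_)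
      (fun y hy => ?_)
    all_goals rw [interior_Ici] at hy
    · exact (hderiv y hy.le).hasDerivWithinAt
    · linarith [hf' y hy.le]
  linarith [hanti self_mem_Ici hx hx]

lemma eventually_div_lt_of_hasDerivAt_le {f f' : ℝ → ℝ} {d c : ℝ}
    (hf : ∀ᶠ x in atTop, HasDerivAt f (f' x) x) (hf' : ∀ᶠ x in atTop, f' x ≤ d)
    (hdc : d < c) : ∀ᶠ x in atTop, f x / x < c := by
  obtain ⟨N, hN⟩ := eventually_atTop.1 (hf.and hf')
  have hsmall : Tendsto (fun x => d + (f N - d * N) / x) atTop (𝓝 d) := by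
    simpa using (tendsto_const_nhds (x := d)).add (tendsto_const_nhds.div_atTop tendsto_id)
  filter_upwards [hsmall.eventually (gt_mem_nhds hdc), eventually_ge_atTop N,
    eventually_gt_atTop 0] with x hlt hNx hx
  calc f x / x ≤ (f N + d * (x - N)) / x := by
        gcongr
        exact le_add_mul_sub_of_hasDerivAt_le (fun y hy => (hN y hy).1) (fun y hy => (hN y hy).2)
          hNx
    _ = d + (f N - d * N) / x := by field_simp; ring
    _ < c := hlt

lemma tendsto_div_id_of_hasDerivAt {f f' : ℝ → ℝ} {c : ℝ}
    (hf : ∀ᶠ x in atTop, HasDerivAt f (f' x) x) (h : Tendsto f' atTop (𝓝 c)) :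
    Tendsto (fun x => f x / x) atTop (𝓝 c) := by
  refine tendsto_order.2 ⟨fun b hb => ?_, fun b hb => ?_⟩
  · obtain ⟨d, hbd, hdc⟩ := exists_between hb
    have hneg := eventually_div_lt_of_hasDerivAt_le (hf.mono fun x hx => hx.neg)
      (h.eventually (lt_mem_nhds hdc) |>.mono fun x hx => neg_le_neg hx.le) (neg_lt_neg hbd)
    filter_upwards [hneg] with x hx
    rw [Pi.neg_apply, neg_div] at hx
    linarith
  · obtain ⟨d, hcd, hdb⟩ := exists_between hb
    exact eventually_div_lt_of_hasDerivAt_le hf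
      (h.eventually (gt_mem_nhds hcd) |>.mono fun x hx => hx.le) hdb

lemma tendsto_atTop_of_hasDerivAt_comp {g F : ℝ → ℝ} (hF : Continuous F)
    (hFpos : ∀ y, 0 < F y) (hg : ∀ s, HasDerivAt g (F (g s)) s) : Tendsto g atTop atTop := by
  have hmono : Monotone g := (strictMono_of_hasDerivAt_pos hg fun s => hFpos _).monotone
  refine tendsto_atTop_atTop_of_monotone' hmono fun hbdd => ?_
  have hlim := tendsto_atTop_ciSup hmono hbdd
  have hslope : Tendsto (fun s => g s / s) atTop (𝓝 (F (⨆ s, g s))) :=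
    tendsto_div_id_of_hasDerivAt (.of_forall hg) ((hF.tendsto _).comp hlim)
  exact not_tendsto_nhds_of_tendsto_atTop (tendsto_id.num (hFpos _) hslope) _ hlim

lemma tendsto_atTop_of_rightInverse {g ginv : ℝ → ℝ} (hmono : Monotone g)
    (hinv : ∀ t, g (ginv t) = t) : Tendsto ginv atTop atTop := by
  refine tendsto_atTop_atTop.2 fun M => ⟨g M + 1, fun t ht => ?_⟩
  by_contra! hlt
  linarith [hinv t ▸ hmono hlt.le]

lemma tendsto_rpow_div_sqrt {a : ℝ → ℝ} {k A : ℝ} (hA : 0 < A)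
    (h : Tendsto (fun y => a y / y ^ k) atTop (𝓝 A)) :
    Tendsto (fun y => y ^ (k / 2) / √(a y)) atTop (𝓝 (√A)⁻¹) := by
  have hsqrt := ((Real.continuous_sqrt.tendsto A).comp h).inv₀ (Real.sqrt_pos.2 hA).ne'
  refine hsqrt.congr' ?_
  filter_upwards [eventually_gt_atTop 0] with y hy
  rw [Function.comp_apply, Real.sqrt_div' _ (by positivity), inv_div, Real.sqrt_eq_rpow,
    ← Real.rpow_mul hy.le]
  ring_nf

lemma tendsto_div_rpow_of_tendsto_rpow_div {α : Type*} {l : Filter α} {u v : α → ℝ}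
    {p q L : ℝ} (hpq : p * q = 1) (hL : 0 < L) (hu : ∀ᶠ t in l, 0 ≤ u t)
    (hv : ∀ᶠ t in l, 0 ≤ v t) (h : Tendsto (fun t => u t ^ p / v t) l (𝓝 L)) :
    Tendsto (fun t => u t / v t ^ q) l (𝓝 (L ^ q)) := by
  refine ((Real.continuousAt_rpow_const L q (.inl hL.ne')).tendsto.comp h).congr' ?_
  filter_upwards [hu, hv] with t hut hvt
  rw [Function.comp_apply, Real.div_rpow (Real.rpow_nonneg hut p) hvt, ← Real.rpow_mul hut,
    hpq, Real.rpow_one]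

lemma tendsto_rightInverse_div_rpow {g ginv : ℝ → ℝ} {p q L : ℝ} (hqp : q * p = 1)
    (hL : 0 < L) (hginv : Tendsto ginv atTop atTop) (hinv : ∀ t, g (ginv t) = t)
    (h : Tendsto (fun s => g s / s ^ q) atTop (𝓝 L)) :
    Tendsto (fun t => ginv t / t ^ p) atTop (𝓝 (L ^ (-p))) := by
  have hcomp : Tendsto (fun t => ginv t ^ q / t) atTop (𝓝 L⁻¹) := by
    refine ((h.comp hginv).inv₀ hL.ne').congr fun t => ?_
    rw [Function.comp_apply, hinv, inv_div]
  rw [Real.rpow_neg hL.le, ← Real.inv_rpow hL.le]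
  exact tendsto_div_rpow_of_tendsto_rpow_div hqp (inv_pos.2 hL)
    (hginv.eventually_ge_atTop 0) (eventually_ge_atTop 0) hcomp

theorem stmt_2_general (a g ginv : ℝ → ℝ) (ha : ContDiff ℝ 1 a) (ν : ℝ) (hν : 0 < ν)
    (hab : ∀ s, ν ≤ a s)
    (hg : ∀ s, HasDerivAt g (1 / Real.sqrt (a (g s))) s)
    (hmono : StrictMono g)
    (hinv2 : ∀ t, g (ginv t) = t)
    (k aInf : ℝ) (hk : 0 < k) (haInf : 0 < aInf)
    (haAsym : Tendsto (fun s => a s / s ^ k) atTop (𝓝 aInf)) :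
    Tendsto (fun s => g s / s ^ (2 / (k + 2))) atTop
      (𝓝 (((k + 2) / (2 * Real.sqrt aInf)) ^ (2 / (k + 2)))) ∧
    Tendsto (fun t => ginv t / t ^ ((k + 2) / 2)) atTop
      (𝓝 ((((k + 2) / (2 * Real.sqrt aInf)) ^ (2 / (k + 2))) ^ (-((k + 2) / 2)))) := by
  have hsqrt_pos : ∀ y, 0 < √(a y) := fun y => Real.sqrt_pos.2 (hν.trans_le (hab y))
  have hgtop : Tendsto g atTop atTop :=
    tendsto_atTop_of_hasDerivAt_comp
      (continuous_const.div ha.continuous.sqrt fun y => (hsqrt_pos y).ne')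
      (fun y => one_div_pos.2 (hsqrt_pos y)) hg
  have hpow : Tendsto (fun s => g s ^ ((k + 2) / 2) / s) atTop
      (𝓝 ((k + 2) / (2 * √aInf))) := by
    refine tendsto_div_id_of_hasDerivAt
      (.of_forall fun s => (Real.hasDerivAt_rpow_const (.inr (by linarith))).comp s (hg s)) ?_
    convert ((tendsto_rpow_div_sqrt haInf haAsym).comp hgtop).const_mul ((k + 2) / 2) using 1
    · ext s
      simp only [Function.comp_apply]
      ring_nf
    · field_simp
  have hfirst : Tendsto (fun s => g s / s ^ (2 / (k + 2))) atTop
      (𝓝 (((k + 2) / (2 * √aInf)) ^ (2 / (k + 2)))) :=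
    tendsto_div_rpow_of_tendsto_rpow_div (by field_simp) (by positivity)
      (hgtop.eventually_ge_atTop 0) (eventually_ge_atTop 0) hpow
  exact ⟨hfirst, tendsto_rightInverse_div_rpow (by field_simp) (by positivity)
    (tendsto_atTop_of_rightInverse hmono.monotone hinv2) hinv2 hfirst⟩

theorem stmt_2 (a g ginv : ℝ → ℝ) (ha : ContDiff ℝ 1 a) (ν : ℝ) (hν : 0 < ν)
    (hab : ∀ s, ν ≤ a s)
    (hg : ∀ s, HasDerivAt g (1 / Real.sqrt (a (g s))) s) (hg0 : g 0 = 0)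
    (hmono : StrictMono g)
    (hinv1 : ∀ s, ginv (g s) = s) (hinv2 : ∀ t, g (ginv t) = t)
    (k aInf : ℝ) (hk : 0 < k) (haInf : 0 < aInf)
    (haAsym : Tendsto (fun s => a s / s ^ k) atTop (𝓝 aInf)) :
    Tendsto (fun s => g s / s ^ (2 / (k + 2))) atTop
      (𝓝 (((k + 2) / (2 * Real.sqrt aInf)) ^ (2 / (k + 2)))) ∧
    Tendsto (fun t => ginv t / t ^ ((k + 2) / 2)) atTop
      (𝓝 ((((k + 2) / (2 * Real.sqrt aInf)) ^ (2 / (k + 2))) ^ (-((k + 2) / 2)))) :=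
  stmt_2_general a g ginv ha ν hν hab hg hmono hinv2 k aInf hk haInf haAsym
end

section
/- If a(s)/e^{2γs} → a_∞ as s → +∞ for constants γ > 0 and a_∞ > 0, then g(s)/log s → 1/γ as s → +∞, and g⁻¹(t)/e^{γt} → √a_∞/γ as t → +∞. -/
/-!
Since `g' = 1 / √(a ∘ g)`, the inverse satisfies `(g⁻¹)' = √a`, which grows like `√a_∞ e^{γt}`;
L'Hôpital's rule in the form `∞/∞` then gives `g⁻¹(t) ~ (√a_∞ / γ) e^{γt}`. Taking logarithms,
`log g⁻¹(t) ~ γ t`, and substituting `t = g(s)` yields `log s ~ γ g(s)`.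
-/

open Filter Topology Set

section LHopitalAtTop

variable {f g f' g' : ℝ → ℝ}

lemma sub_const_mul_le_of_deriv_le_const_mul {T c : ℝ}
    (hf : ∀ t ≥ T, HasDerivAt f (f' t) t) (hg : ∀ t ≥ T, HasDerivAt g (g' t) t)
    (hle : ∀ t ≥ T, f' t ≤ c * g' t) {t : ℝ} (ht : T ≤ t) :
    f t - c * g t ≤ f T - c * g T := by
  have hderiv : ∀ s ≥ T, HasDerivAt (fun x => f x - c * g x) (f' s - c * g' s) s :=
    fun s hs => (hf s hs).sub ((hg s hs).const_mul c)
  have hanti : AntitoneOn (fun x => f x - c * g x) (Ici T) := by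
    refine antitoneOn_of_hasDerivWithinAt_nonpos (f' := fun s => f' s - c * g' s) (convex_Ici T)
      (fun s hs => (hderiv s hs).continuousAt.continuousWithinAt) ?_ ?_ <;>
      simp only [interior_Ici, mem_Ioi]
    · exact fun s hs => (hderiv s hs.le).hasDerivWithinAt
    · exact fun s hs => by linarith [hle s hs.le]
  exact hanti self_mem_Ici ht ht

lemma eventually_div_lt_of_deriv_le_const_mul {c c' : ℝ} (hcc' : c < c')
    (hf : ∀ᶠ t in atTop, HasDerivAt f (f' t) t) (hg : ∀ᶠ t in atTop, HasDerivAt g (g' t) t)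
    (hgtop : Tendsto g atTop atTop) (hle : ∀ᶠ t in atTop, f' t ≤ c * g' t) :
    ∀ᶠ t in atTop, f t / g t < c' := by
  obtain ⟨T, hT⟩ := eventually_atTop.1 (hf.and (hg.and hle))
  have hbound : ∀ t ≥ T, f t ≤ (f T - c * g T) + c * g t := fun t ht => by
    linarith [sub_const_mul_le_of_deriv_le_const_mul (fun s hs => (hT s hs).1)
      (fun s hs => (hT s hs).2.1) (fun s hs => (hT s hs).2.2) ht]
  have hsmall : ∀ᶠ t in atTop, (f T - c * g T) / g t < c' - c :=
    (tendsto_const_nhds.div_atTop hgtop).eventually_lt_const (sub_pos.2 hcc')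
  filter_upwards [eventually_ge_atTop T, hgtop.eventually_gt_atTop 0, hsmall]
    with t ht hgt hsmall
  calc f t / g t ≤ ((f T - c * g T) + c * g t) / g t :=
        div_le_div_of_nonneg_right (hbound t ht) hgt.le
    _ = (f T - c * g T) / g t + c := by field_simp
    _ < c' := by linarith

theorem lhopital_atTop_of_tendsto_atTop {L : ℝ}
    (hf : ∀ᶠ t in atTop, HasDerivAt f (f' t) t) (hg : ∀ᶠ t in atTop, HasDerivAt g (g' t) t)
    (hg' : ∀ᶠ t in atTop, 0 < g' t) (hgtop : Tendsto g atTop atTop)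
    (hlim : Tendsto (fun t => f' t / g' t) atTop (𝓝 L)) :
    Tendsto (fun t => f t / g t) atTop (𝓝 L) := by
  refine tendsto_order.2 ⟨fun b hb => ?_, fun b hb => ?_⟩
  · have hle : ∀ᶠ t in atTop, -f' t ≤ -((b + L) / 2) * g' t := by
      filter_upwards [hg', hlim.eventually_const_lt (by linarith : (b + L) / 2 < L)]
        with t hpos hlt
      rw [lt_div_iff₀ hpos] at hlt
      linarith
    filter_upwards [eventually_div_lt_of_deriv_le_const_mul (by linarith : -((b + L) / 2) < -b)
      (hf.mono fun t h => h.neg) hg hgtop hle] with t ht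
    rw [Pi.neg_apply, neg_div] at ht
    linarith
  · have hle : ∀ᶠ t in atTop, f' t ≤ (b + L) / 2 * g' t := by
      filter_upwards [hg', hlim.eventually_lt_const (by linarith : L < (b + L) / 2)]
        with t hpos hlt
      rw [div_lt_iff₀ hpos] at hlt
      linarith
    exact eventually_div_lt_of_deriv_le_const_mul (by linarith) hf hg hgtop hle

end LHopitalAtTop

lemma tendsto_log_div_of_tendsto_div_exp {u : ℝ → ℝ} {γ c : ℝ} (hc : 0 < c)
    (hu : Tendsto (fun t => u t / Real.exp (γ * t)) atTop (𝓝 c)) :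
    Tendsto (fun t => Real.log (u t) / t) atTop (𝓝 γ) := by
  have hlog : Tendsto (fun t => Real.log (u t) - γ * t) atTop (𝓝 (Real.log c)) := by
    refine (hu.log hc.ne').congr' ?_
    filter_upwards [hu.eventually_const_lt hc] with t ht
    have hut : 0 < u t := (div_pos_iff_of_pos_right (Real.exp_pos _)).1 ht
    rw [Real.log_div hut.ne' (Real.exp_pos _).ne', Real.log_exp]
  have := (hlog.div_atTop tendsto_id).add_const γ
  rw [zero_add] at this
  refine this.congr' ?_
  filter_upwards [eventually_gt_atTop 0] with t ht
  simp only [id]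
  field_simp
  ring

theorem StrictMono.hasDerivAt_inverse {g ginv g' : ℝ → ℝ} (hmono : StrictMono g)
    (hg : ∀ s, HasDerivAt g (g' s) s) (hg' : ∀ s, g' s ≠ 0)
    (hinv1 : ∀ s, ginv (g s) = s) (hinv2 : ∀ t, g (ginv t) = t) (t : ℝ) :
    HasDerivAt ginv (g' (ginv t))⁻¹ t := by
  have hginv_mono : Monotone ginv := fun x y hxy => by
    rwa [← hmono.le_iff_le, hinv2, hinv2]
  have hginv_cont : Continuous ginv :=
    hginv_mono.continuous_of_surjective fun s => ⟨g s, hinv1 s⟩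
  exact HasDerivAt.of_local_left_inverse hginv_cont.continuousAt ((hinv2 t).symm ▸ hg (ginv t))
    (hg' _) (Eventually.of_forall hinv2)

theorem stmt_3_general (a g ginv : ℝ → ℝ) (ν : ℝ) (hν : 0 < ν)
    (hab : ∀ s, ν ≤ a s)
    (hg : ∀ s, HasDerivAt g (1 / Real.sqrt (a (g s))) s)
    (hinv1 : ∀ s, ginv (g s) = s) (hinv2 : ∀ t, g (ginv t) = t)
    (γ aInf : ℝ) (hγ : 0 < γ) (haInf : 0 < aInf)
    (haAsym : Tendsto (fun s => a s / Real.exp (2 * γ * s)) atTop (𝓝 aInf)) :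
    Tendsto (fun s => g s / Real.log s) atTop (𝓝 (1 / γ)) ∧
    Tendsto (fun t => ginv t / Real.exp (γ * t)) atTop (𝓝 (Real.sqrt aInf / γ)) := by
  have hg' : ∀ s, 0 < 1 / Real.sqrt (a (g s)) := fun s => by
    have := hν.trans_le (hab (g s))
    positivity
  have hmono : StrictMono g := strictMono_of_hasDerivAt_pos hg hg'
  have hginv : ∀ t, HasDerivAt ginv (Real.sqrt (a t)) t := fun t => by
    simpa [hinv2] using hmono.hasDerivAt_inverse hg (fun s => (hg' s).ne') hinv1 hinv2 t
  have hsqrt : Tendsto (fun t => Real.sqrt (a t) / Real.exp (γ * t)) atTop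
      (𝓝 (Real.sqrt aInf)) := by
    refine ((Real.continuous_sqrt.tendsto aInf).comp haAsym).congr fun t => ?_
    rw [Function.comp_apply, Real.sqrt_div' _ (Real.exp_pos _).le, ← Real.exp_half]
    ring_nf
  have hexp : ∀ t, HasDerivAt (fun t => Real.exp (γ * t)) (γ * Real.exp (γ * t)) t := fun t => by
    simpa [mul_comm] using ((hasDerivAt_id t).const_mul γ).exp
  have hginv_asym : Tendsto (fun t => ginv t / Real.exp (γ * t)) atTop
      (𝓝 (Real.sqrt aInf / γ)) := by
    refine lhopital_atTop_of_tendsto_atTop (.of_forall hginv) (.of_forall hexp)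
      (.of_forall fun t => by positivity)
      (Real.tendsto_exp_atTop.comp (tendsto_id.const_mul_atTop hγ)) ?_
    exact (hsqrt.div_const γ).congr fun t => by field_simp
  refine ⟨?_, hginv_asym⟩
  have hgtop : Tendsto g atTop atTop :=
    hmono.monotone.tendsto_atTop_atTop fun t => ⟨ginv t, (hinv2 t).ge⟩
  have hlog := ((tendsto_log_div_of_tendsto_div_exp (by positivity) hginv_asym).comp hgtop).inv₀
    hγ.ne'
  simp only [Function.comp_def, hinv1, inv_div] at hlog
  simpa only [one_div] using hlog

theorem stmt_3 (a g ginv : ℝ → ℝ) (ha : ContDiff ℝ 1 a) (ν : ℝ) (hν : 0 < ν)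
    (hab : ∀ s, ν ≤ a s)
    (hg : ∀ s, HasDerivAt g (1 / Real.sqrt (a (g s))) s) (hg0 : g 0 = 0)
    (hinv1 : ∀ s, ginv (g s) = s) (hinv2 : ∀ t, g (ginv t) = t)
    (γ aInf : ℝ) (hγ : 0 < γ) (haInf : 0 < aInf)
    (haAsym : Tendsto (fun s => a s / Real.exp (2 * γ * s)) atTop (𝓝 aInf)) :
    Tendsto (fun s => g s / Real.log s) atTop (𝓝 (1 / γ)) ∧
    Tendsto (fun t => ginv t / Real.exp (γ * t)) atTop (𝓝 (Real.sqrt aInf / γ)) :=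
  stmt_3_general a g ginv ν hν hab hg hinv1 hinv2 γ aInf hγ haInf haAsym
end

section
/- If a(s)/(log s)^{2γ} → a_∞ as s → +∞ for constants γ > 0 and a_∞ > 0, then g(s)/s^{1-ε} → +∞ for every ε ∈ (0,1) and g(s)/s → 0 as s → +∞. In particular, for every ε ∈ (0,1) there exists R > 0 such that s^{1-ε} ≤ g(s) ≤ s for all s ≥ R. -/
open Filter Topology Asymptotics

/-!
Since `g' = 1 / √(a ∘ g) > 0` and `a` is bounded on compact sets, `g` increases to `+∞`.
Then `a ∘ g → ∞` because `a ~ a_∞ (log s)^{2γ}`, so `g' → 0` and `g = o(s)`. On the other hand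
`(log s)^{2γ} = o(s^ε)`, so together with `g(s) ≤ s` we get `a(g(s)) ≤ s^ε`, i.e.
`g'(s) ≥ s^{-ε/2}` for large `s`; integrating, `g(s) ≥ c s^{1-ε/2} - C`, which beats `s^{1-ε}`.
-/

lemma exists_eventually_le_add_of_hasDerivAt_le {f g f' g' : ℝ → ℝ}
    (hf : ∀ᶠ x in atTop, HasDerivAt f (f' x) x) (hg : ∀ᶠ x in atTop, HasDerivAt g (g' x) x)
    (hle : ∀ᶠ x in atTop, f' x ≤ g' x) : ∃ C, ∀ᶠ x in atTop, f x ≤ g x + C := by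
  obtain ⟨x₀, hx₀⟩ := eventually_atTop.1 (hf.and (hg.and hle))
  have hmono : MonotoneOn (fun x => g x - f x) (Set.Ici x₀) := by
    refine monotoneOn_of_hasDerivWithinAt_nonneg (f' := fun x => g' x - f' x)
      (convex_Ici x₀) (fun x hx => ?_) (fun x hx => ?_) (fun x hx => ?_) <;>
      simp only [interior_Ici, Set.mem_Ioi, Set.mem_Ici] at hx
    · exact ((hx₀ x hx).2.1.sub (hx₀ x hx).1).continuousAt.continuousWithinAt
    · exact ((hx₀ x hx.le).2.1.sub (hx₀ x hx.le).1).hasDerivWithinAt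
    · exact sub_nonneg.2 (hx₀ x hx.le).2.2
  refine ⟨f x₀ - g x₀, eventually_atTop.2 ⟨x₀, fun x hx => ?_⟩⟩
  have := hmono Set.self_mem_Ici hx hx
  linarith

lemma tendsto_atTop_of_hasDerivAt_eq_comp {f φ : ℝ → ℝ} (hφ : Continuous φ)
    (hφ_pos : ∀ y, 0 < φ y) (hf : ∀ x, HasDerivAt f (φ (f x)) x) : Tendsto f atTop atTop := by
  have hmono : Monotone f := (strictMono_of_hasDerivAt_pos hf fun x => hφ_pos _).monotone
  refine tendsto_atTop_atTop_of_monotone hmono fun b => ?_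
  by_contra! hb
  obtain ⟨y, -, hy⟩ := (isCompact_Icc (a := f 0) (b := b)).exists_isMinOn
    (Set.nonempty_Icc.2 (hb 0).le) hφ.continuousOn
  -- while `f` stays in `[f 0, b]`, its slope is at least `φ y > 0`
  obtain ⟨C, hC⟩ := exists_eventually_le_add_of_hasDerivAt_le
    (f := fun x => φ y * x) (f' := fun _ => φ y)
    (Eventually.of_forall fun x => by simpa using (hasDerivAt_id x).const_mul (φ y))
    (Eventually.of_forall hf)
    (eventually_ge_atTop 0 |>.mono fun x hx => hy ⟨hmono hx, (hb x).le⟩)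
  obtain ⟨x, hxC, hx⟩ := (hC.and (eventually_ge_atTop ((b + C) / φ y))).exists
  rw [div_le_iff₀' (hφ_pos y)] at hx
  linarith [hb x]

lemma isLittleO_id_of_tendsto_deriv {f f' : ℝ → ℝ} (hf : ∀ x, HasDerivAt f (f' x) x)
    (hf' : Tendsto f' atTop (𝓝 0)) : f =o[atTop] id := by
  refine IsLittleO.of_bound fun c hc => ?_
  obtain ⟨x₀, hx₀⟩ := eventually_atTop.1
    (hf'.eventually (Metric.closedBall_mem_nhds 0 (half_pos hc)))
  have hlip : ∀ x, x₀ ≤ x → ‖f x - f x₀‖ ≤ c / 2 * ‖x - x₀‖ := fun x hx =>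
    (convex_Ici x₀).norm_image_sub_le_of_norm_hasDerivWithin_le
      (fun y _ => (hf y).hasDerivWithinAt) (fun y hy => by simpa using hx₀ y hy)
      Set.self_mem_Ici hx
  filter_upwards [eventually_ge_atTop x₀, eventually_ge_atTop 0,
    eventually_ge_atTop (2 * (‖f x₀‖ + c / 2 * ‖x₀‖) / c)] with x hx hx0 hxK
  rw [div_le_iff₀ hc] at hxK
  calc ‖f x‖ ≤ ‖f x₀‖ + ‖f x - f x₀‖ := norm_le_insert' _ _
    _ ≤ ‖f x₀‖ + c / 2 * (‖x‖ + ‖x₀‖) := by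
        gcongr; exact (hlip x hx).trans (by gcongr; exact norm_sub_le _ _)
    _ ≤ c * ‖id x‖ := by rw [id, Real.norm_of_nonneg hx0]; linarith

lemma isLittleO_rpow_of_tendsto_div_log_rpow {a : ℝ → ℝ} {γ L δ : ℝ}
    (ha : Tendsto (fun s => a s / Real.log s ^ γ) atTop (𝓝 L)) (hδ : 0 < δ) :
    a =o[atTop] fun s => s ^ δ := by
  have hbig : a =O[atTop] fun s => Real.log s ^ γ := by
    refine ((ha.isBigO_one ℝ).mul (isBigO_refl (fun s => Real.log s ^ γ) atTop)).congr' ?_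
      (by simp)
    filter_upwards [eventually_gt_atTop 1] with s hs
    have : 0 < Real.log s ^ γ := Real.rpow_pos_of_pos (Real.log_pos hs) γ
    field_simp
  exact hbig.trans_isLittleO (isLittleO_log_rpow_rpow_atTop γ hδ)

lemma tendsto_div_rpow_atTop_of_rpow_neg_le_deriv {f f' : ℝ → ℝ} {δ ε : ℝ} (hδε : δ < ε)
    (hε : ε < 1) (hf : ∀ x, HasDerivAt f (f' x) x) (hf' : ∀ᶠ x in atTop, x ^ (-δ) ≤ f' x) :
    Tendsto (fun x => f x / x ^ (1 - ε)) atTop atTop := by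
  have hδ1 : 0 < 1 - δ := by linarith
  have hderiv : ∀ᶠ x in atTop, HasDerivAt (fun x => x ^ (1 - δ) / (1 - δ)) (x ^ (-δ)) x := by
    filter_upwards [eventually_gt_atTop 0] with x hx
    refine ((Real.hasDerivAt_rpow_const (Or.inl hx.ne')).div_const (1 - δ)).congr_deriv ?_
    rw [mul_div_cancel_left₀ _ hδ1.ne']
    ring_nf
  obtain ⟨C, hC⟩ := exists_eventually_le_add_of_hasDerivAt_le hderiv (.of_forall hf) hf'
  have hlim : Tendsto (fun x => x ^ (ε - δ) / (1 - δ) + -C * x ^ (-(1 - ε))) atTop atTop :=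
    ((tendsto_rpow_atTop (sub_pos.2 hδε)).atTop_div_const hδ1).atTop_add
      (by simpa using (tendsto_rpow_neg_atTop (sub_pos.2 hε)).const_mul (-C))
  refine tendsto_atTop_mono' atTop ?_ hlim
  filter_upwards [hC, eventually_gt_atTop 0] with x hx hx0
  have e : x ^ (ε - δ) / (1 - δ) + -C * x ^ (-(1 - ε))
      = (x ^ (1 - δ) / (1 - δ) - C) / x ^ (1 - ε) := by
    rw [show ε - δ = (1 - δ) - (1 - ε) by ring, Real.rpow_sub hx0, Real.rpow_neg hx0.le]
    ring
  rw [e]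
  gcongr
  linarith

lemma eventually_rpow_neg_le_inv_sqrt_comp {a g : ℝ → ℝ} {ε : ℝ} (hε : 0 ≤ ε)
    (ha_pos : ∀ y, 0 < a y) (ha : a =o[atTop] fun y => y ^ ε) (hg_top : Tendsto g atTop atTop)
    (hg_le : ∀ᶠ s in atTop, g s ≤ s) :
    ∀ᶠ s in atTop, s ^ (-(ε / 2)) ≤ 1 / Real.sqrt (a (g s)) := by
  filter_upwards [hg_top.eventually (ha.bound one_pos), hg_top.eventually_ge_atTop 0, hg_le,
    eventually_gt_atTop 0] with s ha_gs hgs₀ hgs hs₀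
  have ha_le : a (g s) ≤ s ^ ε := by
    refine le_trans ?_ (Real.rpow_le_rpow hgs₀ hgs hε)
    simpa [Real.norm_of_nonneg (Real.rpow_nonneg hgs₀ ε), abs_of_pos (ha_pos _)] using ha_gs
  have hsqrt_le : Real.sqrt (a (g s)) ≤ s ^ (ε / 2) := by
    rw [← Real.sqrt_sq (Real.rpow_nonneg hs₀.le _), ← Real.rpow_natCast, ← Real.rpow_mul hs₀.le]
    exact Real.sqrt_le_sqrt (by rwa [Nat.cast_ofNat, div_mul_cancel₀ _ two_ne_zero])
  rw [Real.rpow_neg hs₀.le, ← one_div]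
  exact one_div_le_one_div_of_le (Real.sqrt_pos.2 (ha_pos _)) hsqrt_le

lemma eventually_rpow_le_of_tendsto_div_rpow_atTop {f : ℝ → ℝ} {p : ℝ}
    (h : Tendsto (fun s => f s / s ^ p) atTop atTop) : ∀ᶠ s in atTop, s ^ p ≤ f s := by
  filter_upwards [h.eventually_ge_atTop 1, eventually_gt_atTop 0] with s hs₁ hs
  exact (one_le_div (Real.rpow_pos_of_pos hs p)).1 hs₁

theorem stmt_4_general (a g : ℝ → ℝ) (ha : ContDiff ℝ 1 a) (ν : ℝ) (hν : 0 < ν)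
    (hab : ∀ s, ν ≤ a s)
    (hg : ∀ s, HasDerivAt g (1 / Real.sqrt (a (g s))) s)
    (γ aInf : ℝ) (hγ : 0 < γ) (haInf : 0 < aInf)
    (haAsym : Tendsto (fun s => a s / (Real.log s) ^ (2 * γ)) atTop (𝓝 aInf)) :
    (∀ ε : ℝ, ε ∈ Set.Ioo (0:ℝ) 1 →
      Tendsto (fun s => g s / s ^ (1 - ε)) atTop atTop) ∧
    Tendsto (fun s => g s / s) atTop (𝓝 0) ∧
    (∀ ε : ℝ, ε ∈ Set.Ioo (0:ℝ) 1 →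
      ∃ R : ℝ, 0 < R ∧ ∀ s, R ≤ s → s ^ (1 - ε) ≤ g s ∧ g s ≤ s) := by
  have ha_pos : ∀ y, 0 < a y := fun y => hν.trans_le (hab y)
  have hg_top : Tendsto g atTop atTop :=
    tendsto_atTop_of_hasDerivAt_eq_comp
      (continuous_const.div ha.continuous.sqrt fun y => (Real.sqrt_pos.2 (ha_pos y)).ne')
      (fun y => one_div_pos.2 (Real.sqrt_pos.2 (ha_pos y))) hg
  have ha_top : Tendsto a atTop atTop :=
    ((tendsto_rpow_atTop (by positivity)).comp Real.tendsto_log_atTop).num haInf haAsym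
  have hg'_lim : Tendsto (fun s => 1 / Real.sqrt (a (g s))) atTop (𝓝 0) := by
    simpa only [one_div, Function.comp_def, Pi.inv_def] using
      (Real.tendsto_sqrt_atTop.comp (ha_top.comp hg_top)).inv_tendsto_atTop
  have hg_div : Tendsto (fun s => g s / s) atTop (𝓝 0) :=
    (isLittleO_id_of_tendsto_deriv hg hg'_lim).tendsto_div_nhds_zero
  have hg_le : ∀ᶠ s in atTop, g s ≤ s := by
    filter_upwards [hg_div.eventually_lt_const one_pos, eventually_gt_atTop 0] with s hs hs₀
    exact ((div_lt_one hs₀).1 hs).le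
  have hg_growth : ∀ ε ∈ Set.Ioo (0:ℝ) 1, Tendsto (fun s => g s / s ^ (1 - ε)) atTop atTop := by
    rintro ε ⟨hε₀, hε₁⟩
    exact tendsto_div_rpow_atTop_of_rpow_neg_le_deriv (half_lt_self hε₀) hε₁ hg
      (eventually_rpow_neg_le_inv_sqrt_comp hε₀.le ha_pos
        (isLittleO_rpow_of_tendsto_div_log_rpow haAsym hε₀) hg_top hg_le)
  refine ⟨hg_growth, hg_div, fun ε hε => ?_⟩
  obtain ⟨R, hR⟩ :=
    eventually_atTop.1 ((eventually_rpow_le_of_tendsto_div_rpow_atTop (hg_growth ε hε)).and hg_le)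
  exact ⟨max R 1, by positivity, fun s hs => hR s (le_of_max_le_left hs)⟩

theorem stmt_4 (a g : ℝ → ℝ) (ha : ContDiff ℝ 1 a) (ν : ℝ) (hν : 0 < ν)
    (hab : ∀ s, ν ≤ a s)
    (hg : ∀ s, HasDerivAt g (1 / Real.sqrt (a (g s))) s) (hg0 : g 0 = 0)
    (γ aInf : ℝ) (hγ : 0 < γ) (haInf : 0 < aInf)
    (haAsym : Tendsto (fun s => a s / (Real.log s) ^ (2 * γ)) atTop (𝓝 aInf)) :
    (∀ ε : ℝ, ε ∈ Set.Ioo (0:ℝ) 1 →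
      Tendsto (fun s => g s / s ^ (1 - ε)) atTop atTop) ∧
    Tendsto (fun s => g s / s) atTop (𝓝 0) ∧
    (∀ ε : ℝ, ε ∈ Set.Ioo (0:ℝ) 1 →
      ∃ R : ℝ, 0 < R ∧ ∀ s, R ≤ s → s ^ (1 - ε) ≤ g s ∧ g s ≤ s) :=
  stmt_4_general a g ha ν hν hab hg γ aInf hγ haInf haAsym
end

section
/- Assume a(s)/s^k → a_∞ and f(s)/e^{2βs} → f_∞ as s → +∞ with k, β, a_∞, f_∞ > 0. Then there exists r ∈ ℝ with f(r) > 0, f(s) ≥ 0 for s > r, and the Keller–Osserman integral ∫_{g⁻¹(r)}^{+∞} ds/√(F(g(s))) is finite, where F(t) = ∫_r^t f. -/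
/-!
Pick `r` so large that `f s ≥ (f∞/2) e^{2βs}` and `a s ≤ e^{βs}` for `s ≥ r`. Writing
`F t = ∫_r^t f`, the substitution `t = g s`, `ds = √(a t) dt`, turns the Keller–Osserman integral
into `∫_r^∞ √(a t / F t) dt`. Near `r` we have `F t ≥ m (t - r)`, so the integrand is
`O((t - r)^{-1/2})`; for `t ≥ r + 1` we have `F t ≥ c e^{2βt}`, so it is `O(e^{-βt/2})`.
-/

open Filter Topology MeasureTheory Set Real

lemma eventually_le_exp_of_tendsto_div_rpow {a : ℝ → ℝ} {k L β : ℝ} (hβ : 0 < β)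
    (h : Tendsto (fun s => a s / s ^ k) atTop (𝓝 L)) : ∀ᶠ s in atTop, a s ≤ exp (β * s) := by
  have hlim : Tendsto (fun s => a s * exp (-β * s)) atTop (𝓝 0) := by
    have := h.mul (tendsto_rpow_mul_exp_neg_mul_atTop_nhds_zero k β hβ)
    rw [mul_zero] at this
    refine this.congr' ?_
    filter_upwards [eventually_gt_atTop 0] with s hs
    field_simp [(rpow_pos_of_pos hs k).ne']
  filter_upwards [hlim.eventually (eventually_lt_nhds one_pos)] with s hs
  rw [neg_mul, exp_neg, ← div_eq_mul_inv, div_lt_one (exp_pos _)] at hs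
  exact hs.le

lemma eventually_mul_exp_le_of_tendsto_div_exp {f : ℝ → ℝ} {γ L c : ℝ} (hc : c < L)
    (h : Tendsto (fun s => f s / exp (γ * s)) atTop (𝓝 L)) :
    ∀ᶠ s in atTop, c * exp (γ * s) ≤ f s := by
  filter_upwards [h.eventually (eventually_gt_nhds hc)] with s hs
  exact ((lt_div_iff₀ (exp_pos _)).1 hs).le

lemma mul_sub_le_intervalIntegral {f : ℝ → ℝ} {m a b : ℝ} (hf : IntervalIntegrable f volume a b)
    (hab : a ≤ b) (h : ∀ x ∈ Icc a b, m ≤ f x) : m * (b - a) ≤ ∫ x in a..b, f x := by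
  have := intervalIntegral.integral_mono_on hab
    (intervalIntegrable_const : IntervalIntegrable (fun _ => m) volume a b) hf h
  rwa [intervalIntegral.integral_const, smul_eq_mul, mul_comm] at this

section ExponentialLowerBound

variable {f : ℝ → ℝ} {c γ r : ℝ}

lemma mul_exp_mul_sub_le_integral_of_mul_exp_le (hf : Continuous f) (hc : 0 ≤ c) (hγ : 0 ≤ γ)
    (hfr : ∀ s, r ≤ s → c * exp (γ * s) ≤ f s) {t : ℝ} (ht : r ≤ t) :
    c * exp (γ * r) * (t - r) ≤ ∫ x in r..t, f x :=
  mul_sub_le_intervalIntegral (hf.intervalIntegrable r t) ht fun x hx =>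
    (mul_le_mul_of_nonneg_left (exp_le_exp.2 (by nlinarith [hx.1])) hc).trans (hfr x hx.1)

lemma mul_exp_le_integral_of_mul_exp_le (hf : Continuous f) (hc : 0 ≤ c) (hγ : 0 ≤ γ)
    (hfr : ∀ s, r ≤ s → c * exp (γ * s) ≤ f s) {t : ℝ} (ht : r + 1 ≤ t) :
    c * exp (-γ) * exp (γ * t) ≤ ∫ x in r..t, f x := by
  have hsplit := intervalIntegral.integral_add_adjacent_intervals
    (hf.intervalIntegrable (μ := volume) r (t - 1)) (hf.intervalIntegrable (t - 1) t)
  have hhead : 0 ≤ ∫ x in r..(t - 1), f x :=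
    intervalIntegral.integral_nonneg (by linarith) fun x hx =>
      (mul_nonneg hc (exp_pos _).le).trans (hfr x hx.1)
  have htail := mul_exp_mul_sub_le_integral_of_mul_exp_le hf hc hγ
    (fun s hs => hfr s (by linarith)) (show t - 1 ≤ t by linarith)
  have hexp : exp (-γ) * exp (γ * t) = exp (γ * (t - 1)) := by rw [← exp_add]; ring_nf
  rw [← hsplit, mul_assoc, hexp]
  linarith [show t - (t - 1) = 1 by ring]

end ExponentialLowerBound

lemma integrableOn_Ioi_of_le_sub_rpow_of_le_exp {u : ℝ → ℝ} {r b p γ C D : ℝ} (hrb : r ≤ b)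
    (hp : -1 < p) (hγ : 0 < γ) (hu : AEStronglyMeasurable u (volume.restrict (Ioi r)))
    (hnear : ∀ t ∈ Ioc r b, ‖u t‖ ≤ C * (t - r) ^ p)
    (hfar : ∀ t ∈ Ioi b, ‖u t‖ ≤ D * exp (-γ * t)) :
    IntegrableOn u (Ioi r) := by
  rw [← Ioc_union_Ioi_eq_Ioi hrb]
  refine IntegrableOn.union ?_ ?_
  · have hsing : IntegrableOn (fun t => (t - r) ^ p) (Ioc r b) := by
      have := (intervalIntegral.intervalIntegrable_rpow' (a := 0) (b := b - r) hp).comp_sub_right r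
      rw [zero_add, sub_add_cancel] at this
      exact (intervalIntegrable_iff_integrableOn_Ioc_of_le hrb).1 this
    exact (hsing.const_mul C).mono' (hu.mono_set Ioc_subset_Ioi_self)
      ((ae_restrict_iff' measurableSet_Ioc).2 (ae_of_all _ hnear))
  · exact ((exp_neg_integrableOn_Ioi b hγ).const_mul D).mono'
      (hu.mono_set (Ioi_subset_Ioi hrb))
      ((ae_restrict_iff' measurableSet_Ioi).2 (ae_of_all _ hfar))

lemma integrableOn_sqrt_div_of_le_exp {a F : ℝ → ℝ} {r β m c : ℝ} (hβ : 0 < β) (hm : 0 < m)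
    (hc : 0 < c) (ha_meas : Measurable a) (hF_meas : Measurable F)
    (ha : ∀ t, r ≤ t → a t ≤ exp (β * t))
    (hF_near : ∀ t, r ≤ t → m * (t - r) ≤ F t)
    (hF_far : ∀ t, r + 1 ≤ t → c * exp (2 * β * t) ≤ F t) :
    IntegrableOn (fun t => √(a t / F t)) (Ici r) := by
  rw [integrableOn_Ici_iff_integrableOn_Ioi]
  refine integrableOn_Ioi_of_le_sub_rpow_of_le_exp (le_add_of_nonneg_right zero_le_one)
    (by norm_num : (-1 : ℝ) < -(1 / 2)) (half_pos hβ)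
    (ha_meas.div hF_meas).sqrt.aestronglyMeasurable
    (C := √(exp (β * (r + 1)) / m)) (D := (√c)⁻¹) ?_ ?_
  · intro t ⟨hrt, htr⟩
    have hx : 0 < t - r := sub_pos.2 hrt
    rw [norm_of_nonneg (sqrt_nonneg _), sqrt_le_iff]
    refine ⟨by positivity, ?_⟩
    rw [mul_pow, sq_sqrt (by positivity), ← rpow_two, ← rpow_mul hx.le]
    rw [show -(1 / 2 : ℝ) * 2 = -1 by norm_num, rpow_neg_one]
    calc a t / F t ≤ exp (β * (r + 1)) / (m * (t - r)) :=
          div_le_div₀ (exp_pos _).le ((ha t hrt.le).trans (exp_le_exp.2 (by nlinarith)))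
            (by positivity) (hF_near t hrt.le)
      _ = exp (β * (r + 1)) / m * (t - r)⁻¹ := by field_simp
  · intro t ht
    have hexp : exp (2 * β * t) = exp (β * t) * exp (β * t) := by rw [← exp_add]; ring_nf
    rw [norm_of_nonneg (sqrt_nonneg _), sqrt_le_iff]
    refine ⟨by positivity, ?_⟩
    have hdecay : exp (-(β / 2) * t) ^ 2 = (exp (β * t))⁻¹ := by
      rw [← exp_neg, sq, ← exp_add]; ring_nf
    rw [mul_pow, inv_pow, sq_sqrt hc.le, hdecay]
    calc a t / F t ≤ exp (β * t) / (c * exp (2 * β * t)) :=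
          div_le_div₀ (exp_pos _).le (ha t (by linarith [mem_Ioi.1 ht])) (by positivity)
            (hF_far t (le_of_lt ht))
      _ = c⁻¹ * (exp (β * t))⁻¹ := by rw [hexp]; field_simp

lemma integrableOn_comp_Ici_iff_of_hasDerivAt_one_div {g w φ : ℝ → ℝ} (hw : ∀ t, 0 < w t)
    (hg : ∀ s, HasDerivAt g (1 / w (g s)) s) (hg_surj : Function.Surjective g) (x₀ : ℝ) :
    IntegrableOn (fun s => φ (g s)) (Ici x₀) ↔ IntegrableOn (fun t => w t * φ t) (Ici (g x₀)) := by
  have hmono : StrictMono g :=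
    strictMono_of_deriv_pos fun x => (hg x).deriv ▸ one_div_pos.2 (hw _)
  have himage : g '' Ici x₀ = Ici (g x₀) := (hmono.orderIsoOfSurjective g hg_surj).image_Ici x₀
  rw [← himage,
    integrableOn_image_iff_integrableOn_deriv_smul_of_monotoneOn measurableSet_Ici
      (fun x _ => (hg x).hasDerivWithinAt) (hmono.monotone.monotoneOn _)]
  refine integrableOn_congr_fun (fun s _ => ?_) measurableSet_Ici
  simp only [smul_eq_mul]
  field_simp [(hw (g s)).ne']

theorem stmt_5_general (a f g ginv : ℝ → ℝ) (ha : ContDiff ℝ 1 a) (ν : ℝ) (hν : 0 < ν)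
    (hab : ∀ s, ν ≤ a s) (hf : ContDiff ℝ 1 f)
    (hg : ∀ s, HasDerivAt g (1 / Real.sqrt (a (g s))) s)
    (hinv2 : ∀ t, g (ginv t) = t)
    (k β aInf fInf : ℝ) (hβ : 0 < β) (hfInf : 0 < fInf)
    (haAsym : Tendsto (fun s => a s / s ^ k) atTop (𝓝 aInf))
    (hfAsym : Tendsto (fun s => f s / Real.exp (2 * β * s)) atTop (𝓝 fInf)) :
    ∃ r : ℝ, 0 < f r ∧ (∀ s, r < s → 0 ≤ f s) ∧
      IntegrableOn (fun s => 1 / Real.sqrt (∫ τ in r..(g s), f τ))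
        (Set.Ici (ginv r)) := by
  obtain ⟨r, hr⟩ := eventually_atTop.1 <|
    (eventually_mul_exp_le_of_tendsto_div_exp (half_lt_self hfInf) hfAsym).and
      (eventually_le_exp_of_tendsto_div_rpow hβ haAsym)
  have hf_lower : ∀ s, r ≤ s → fInf / 2 * exp (2 * β * s) ≤ f s := fun s hs => (hr s hs).1
  have hf_pos : ∀ s, r ≤ s → 0 < f s := fun s hs =>
    (by positivity : 0 < fInf / 2 * exp (2 * β * s)).trans_le (hf_lower s hs)
  refine ⟨r, hf_pos r le_rfl, fun s hs => (hf_pos s hs.le).le, ?_⟩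
  have ha_pos : ∀ t, 0 < a t := fun t => hν.trans_le (hab t)
  have hF := integrableOn_sqrt_div_of_le_exp hβ (by positivity) (by positivity)
    ha.continuous.measurable
    (intervalIntegral.continuous_primitive (hf.continuous.intervalIntegrable) r).measurable
    (fun t ht => (hr t ht).2)
    (fun t => mul_exp_mul_sub_le_integral_of_mul_exp_le hf.continuous (by positivity)
      (by positivity) hf_lower)
    (fun t => mul_exp_le_integral_of_mul_exp_le hf.continuous (by positivity)
      (by positivity) hf_lower)
  refine (integrableOn_comp_Ici_iff_of_hasDerivAt_one_div (fun t => sqrt_pos.2 (ha_pos t)) hg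
    (Function.LeftInverse.surjective hinv2) (ginv r)
    (φ := fun t => 1 / √(∫ τ in r..t, f τ))).2 ?_
  rw [hinv2]
  refine (integrableOn_congr_fun (fun t _ => ?_) measurableSet_Ici).1 hF
  rw [sqrt_div (ha_pos t).le, mul_one_div]

theorem stmt_5 (a f g ginv : ℝ → ℝ) (ha : ContDiff ℝ 1 a) (ν : ℝ) (hν : 0 < ν)
    (hab : ∀ s, ν ≤ a s) (hf : ContDiff ℝ 1 f)
    (hg : ∀ s, HasDerivAt g (1 / Real.sqrt (a (g s))) s) (hg0 : g 0 = 0)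
    (hinv1 : ∀ s, ginv (g s) = s) (hinv2 : ∀ t, g (ginv t) = t)
    (k β aInf fInf : ℝ) (hk : 0 < k) (hβ : 0 < β) (haInf : 0 < aInf) (hfInf : 0 < fInf)
    (haAsym : Tendsto (fun s => a s / s ^ k) atTop (𝓝 aInf))
    (hfAsym : Tendsto (fun s => f s / Real.exp (2 * β * s)) atTop (𝓝 fInf)) :
    ∃ r : ℝ, 0 < f r ∧ (∀ s, r < s → 0 ≤ f s) ∧
      IntegrableOn (fun s => 1 / Real.sqrt (∫ τ in r..(g s), f τ))
        (Set.Ici (ginv r)) :=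
  stmt_5_general a f g ginv ha ν hν hab hf hg hinv2 k β aInf fInf hβ hfInf haAsym hfAsym
end

section
/- Assume a(s)/s^k → a_∞ and f(s)/s^p → f_∞ as s → +∞ with k, a_∞, f_∞ > 0 and p > 1. Then the Keller–Osserman condition (existence of r with f(r) > 0, f ≥ 0 on (r,∞), and ∫_{g⁻¹(r)}^{+∞} ds/√(F(g(s))) < ∞ with F(t) = ∫_r^t f) holds if and only if p > k + 1. -/
/-!
With `e = (k + 2) / 2`, the derivative `e g^(k/2) / √(a ∘ g)` of `g ^ e` tends to `e / √a_∞`, so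
`g ^ e` grows linearly and `g(s) ≍ s^(2/(k+2))`. Since `f(t) ≍ t^p`, the primitive `F` satisfies
`F(t) ≍ t^(p+1)`, hence `1 / √(F(g s)) ≍ s^(-(p+1)/(k+2))` at infinity, which is integrable iff
`p > k + 1`. At the left endpoint `g⁻¹(r)` the integrand only blows up like `(s - g⁻¹(r))^(-1/2)`,
because `F ∘ g` vanishes there with positive derivative `f(r) / √(a r)`.
-/

open Filter Topology MeasureTheory Set Asymptotics

lemma isTheta_of_eventually_bounds {α : Type*} {l : Filter α} {f g : α → ℝ} {c C : ℝ}
    (hc : 0 < c) (hg : ∀ᶠ x in l, 0 ≤ g x) (h : ∀ᶠ x in l, c * g x ≤ f x ∧ f x ≤ C * g x) :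
    f =Θ[l] g := by
  refine ⟨IsBigO.of_bound C ?_, IsBigO.of_bound c⁻¹ ?_⟩ <;>
    filter_upwards [hg, h] with x hgx ⟨hlow, hup⟩ <;>
    rw [Real.norm_of_nonneg hgx, Real.norm_of_nonneg (by nlinarith)]
  · exact hup
  · rwa [le_inv_mul_iff₀ hc]

lemma eventually_bounds_of_tendsto_div_rpow {u : ℝ → ℝ} {p L : ℝ} (hL : 0 < L)
    (h : Tendsto (fun x => u x / x ^ p) atTop (𝓝 L)) :
    ∀ᶠ x in atTop, L / 2 * x ^ p ≤ u x ∧ u x ≤ 2 * L * x ^ p := by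
  filter_upwards [h (Ioo_mem_nhds (half_lt_self hL) (by linarith : L < 2 * L)),
    eventually_gt_atTop 0] with x ⟨hlow, hup⟩ hx
  have hxp := Real.rpow_pos_of_pos hx p
  rw [lt_div_iff₀ hxp] at hlow
  rw [div_lt_iff₀ hxp] at hup
  exact ⟨hlow.le, hup.le⟩

section MeanValue

variable {h h' : ℝ → ℝ} {D : Set ℝ} {c x y : ℝ}

lemma mul_sub_le_sub_of_hasDerivAt (hd : ∀ z, HasDerivAt h (h' z) z) (hD : Convex ℝ D)
    (hc : ∀ z ∈ D, c ≤ h' z) (hx : x ∈ D) (hy : y ∈ D) (hxy : x ≤ y) :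
    c * (y - x) ≤ h y - h x :=
  hD.mul_sub_le_image_sub_of_le_deriv (fun z _ => (hd z).continuousAt.continuousWithinAt)
    (fun z _ => (hd z).differentiableAt.differentiableWithinAt)
    (fun z hz => (hd z).deriv ▸ hc z (interior_subset hz)) x hx y hy hxy

lemma sub_le_mul_sub_of_hasDerivAt (hd : ∀ z, HasDerivAt h (h' z) z) (hD : Convex ℝ D)
    (hc : ∀ z ∈ D, h' z ≤ c) (hx : x ∈ D) (hy : y ∈ D) (hxy : x ≤ y) :
    h y - h x ≤ c * (y - x) :=
  hD.image_sub_le_mul_sub_of_deriv_le (fun z _ => (hd z).continuousAt.continuousWithinAt)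
    (fun z _ => (hd z).differentiableAt.differentiableWithinAt)
    (fun z hz => (hd z).deriv ▸ hc z (interior_subset hz)) x hx y hy hxy

end MeanValue

theorem isTheta_rpow_add_one_of_hasDerivAt {h h' : ℝ → ℝ} {p L : ℝ} (hp : 0 ≤ p) (hL : 0 < L)
    (hd : ∀ x, HasDerivAt h (h' x) x) (hlim : Tendsto (fun x => h' x / x ^ p) atTop (𝓝 L)) :
    h =Θ[atTop] fun x => x ^ (p + 1) := by
  obtain ⟨T, hT⟩ := ((eventually_bounds_of_tendsto_div_rpow hL hlim).and
    (eventually_gt_atTop 0)).exists_forall_of_atTop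
  have hT0 : 0 < T := (hT T le_rfl).2
  have hmono : ∀ x, T ≤ x → h T ≤ h x := fun x hx => by
    have := mul_sub_le_sub_of_hasDerivAt hd (convex_Ici T) (c := 0)
      (fun z hz => le_trans (by have := (hT z hz).2; positivity) (hT z hz).1.1)
      self_mem_Ici hx hx
    linarith
  have hlower : ∀ x, 2 * T ≤ x → L / 2 / 2 ^ (p + 1) * x ^ (p + 1) ≤ h x - h T := by
    intro x hx
    have hx0 : 0 < x / 2 := by linarith
    have hstep := mul_sub_le_sub_of_hasDerivAt hd (convex_Icc (x / 2) x)
      (c := L / 2 * (x / 2) ^ p)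
      (fun z hz => le_trans (mul_le_mul_of_nonneg_left (Real.rpow_le_rpow hx0.le hz.1 hp)
        (by linarith)) (hT z (by linarith [hz.1])).1.1)
      (left_mem_Icc.2 (by linarith)) (right_mem_Icc.2 (by linarith)) (by linarith)
    have hpow : L / 2 * (x / 2) ^ p * (x - x / 2) = L / 2 / 2 ^ (p + 1) * x ^ (p + 1) := by
      rw [Real.rpow_add_one two_ne_zero, Real.rpow_add_one (by linarith : 0 < x).ne',
        Real.div_rpow (by linarith) zero_le_two]
      field_simp
      ring
    linarith [hmono (x / 2) (by linarith)]
  have hupper : ∀ x, T ≤ x → h x - h T ≤ 2 * L * x ^ (p + 1) := by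
    intro x hx
    have hstep := sub_le_mul_sub_of_hasDerivAt hd (convex_Icc T x) (c := 2 * L * x ^ p)
      (fun z hz => (hT z hz.1).1.2.trans (by gcongr; linarith [hz.1]; exact hz.2))
      (left_mem_Icc.2 hx) (right_mem_Icc.2 hx) hx
    have hTx : 0 ≤ 2 * L * x ^ p * T := by have := (hT x hx).2; positivity
    rw [Real.rpow_add_one (by linarith)]
    linarith
  have hdiff : (fun x => h x - h T) =Θ[atTop] fun x => x ^ (p + 1) :=
    isTheta_of_eventually_bounds (by positivity)
      (eventually_ge_atTop 0 |>.mono fun x hx => Real.rpow_nonneg hx _)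
      (eventually_ge_atTop (2 * T) |>.mono fun x hx =>
        ⟨hlower x hx, hupper x (by linarith)⟩)
  have hconst : (fun _ => h T) =o[atTop] fun x : ℝ => x ^ (p + 1) :=
    isLittleO_const_left.2 <| Or.inr <| tendsto_norm_atTop_atTop.comp
      (tendsto_rpow_atTop (by linarith))
  simpa only [Pi.add_def, sub_add_cancel] using hdiff.add_isLittleO hconst

lemma tendsto_rpow_div_sqrt_of_tendsto_div_rpow {a : ℝ → ℝ} {k A : ℝ} (hA : 0 < A)
    (h : Tendsto (fun t => a t / t ^ k) atTop (𝓝 A)) :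
    Tendsto (fun t => t ^ (k / 2) / √(a t)) atTop (𝓝 (√A)⁻¹) := by
  rw [← Real.sqrt_inv]
  refine ((h.inv₀ hA.ne').sqrt).congr' ?_
  filter_upwards [eventually_ge_atTop 0] with t ht
  rw [inv_div, Real.sqrt_div (Real.rpow_nonneg ht k), Real.sqrt_eq_rpow, ← Real.rpow_mul ht]
  ring_nf

section InvSqrtODE

variable {a g : ℝ → ℝ}

lemma strictMono_of_hasDerivAt_inv_sqrt (ha_pos : ∀ x, 0 < a x)
    (hg : ∀ s, HasDerivAt g (1 / √(a (g s))) s) : StrictMono g :=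
  strictMono_of_hasDerivAt_pos hg fun s => by have := ha_pos (g s); positivity

lemma tendsto_atTop_of_hasDerivAt_inv_sqrt (ha : Continuous a) (ha_pos : ∀ x, 0 < a x)
    (hg : ∀ s, HasDerivAt g (1 / √(a (g s))) s) : Tendsto g atTop atTop := by
  have hmono := strictMono_of_hasDerivAt_inv_sqrt ha_pos hg
  refine tendsto_atTop_atTop_of_monotone' hmono.monotone ?_
  rintro ⟨M, hM⟩
  have hgM : ∀ s, 0 ≤ s → g s ∈ Icc (g 0) M := fun s hs => ⟨hmono.monotone hs, hM ⟨s, rfl⟩⟩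
  obtain ⟨A, hA⟩ := isCompact_Icc.bddAbove_image ha.continuousOn (K := Icc (g 0) M)
  have hsqrtA : 0 < √A :=
    Real.sqrt_pos.2 ((ha_pos _).trans_le (hA (mem_image_of_mem a (hgM 0 le_rfl))))
  -- a ≤ A on the bounded range of g, so g grows at least linearly
  have hlin : ∀ s, 0 ≤ s → (√A)⁻¹ * (s - 0) ≤ g s - g 0 := fun s hs =>
    mul_sub_le_sub_of_hasDerivAt hg (convex_Ici 0) (fun t ht => by
      rw [one_div]
      exact inv_anti₀ (Real.sqrt_pos.2 (ha_pos _))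
        (Real.sqrt_le_sqrt (hA (mem_image_of_mem a (hgM t ht))))) self_mem_Ici hs hs
  have hs : 0 ≤ (M - g 0 + 1) * √A := by
    have := hM ⟨0, rfl⟩; positivity
  have := hlin _ hs
  rw [sub_zero, mul_comm, mul_assoc, mul_inv_cancel₀ hsqrtA.ne'] at this
  linarith [hM ⟨(M - g 0 + 1) * √A, rfl⟩]

theorem isTheta_rpow_of_hasDerivAt_inv_sqrt {k A : ℝ} (ha : Continuous a)
    (ha_pos : ∀ x, 0 < a x) (hg : ∀ s, HasDerivAt g (1 / √(a (g s))) s) (hk : 0 ≤ k)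
    (hA : 0 < A) (haAsym : Tendsto (fun t => a t / t ^ k) atTop (𝓝 A)) :
    g =Θ[atTop] fun s => s ^ (2 / (k + 2)) := by
  have hgtop := tendsto_atTop_of_hasDerivAt_inv_sqrt ha ha_pos hg
  set e := k / 2 + 1 with he
  have hderiv : ∀ s, HasDerivAt (fun s => g s ^ e) (e * (g s ^ (k / 2) / √(a (g s)))) s :=
    fun s => ((hg s).rpow_const (Or.inr (by linarith))).congr_deriv (by
      rw [show e - 1 = k / 2 by ring]; ring)
  have hlim : Tendsto (fun s => e * (g s ^ (k / 2) / √(a (g s))) / s ^ (0 : ℝ)) atTop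
      (𝓝 (e * (√A)⁻¹)) := by
    simpa only [Real.rpow_zero, div_one, Function.comp_def] using
      ((tendsto_rpow_div_sqrt_of_tendsto_div_rpow hA haAsym).comp hgtop).const_mul e
  have hψ := isTheta_rpow_add_one_of_hasDerivAt le_rfl (by positivity) hderiv hlim
  have hg0 : ∀ᶠ s in atTop, 0 ≤ g s := hgtop.eventually (eventually_ge_atTop 0)
  have hroot := hψ.rpow (r := e⁻¹) (hg0.mono fun s hs => Real.rpow_nonneg hs e)
    (eventually_ge_atTop 0 |>.mono fun s hs => Real.rpow_nonneg hs _)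
  have hg_root : g =ᶠ[atTop] fun s => (g s ^ e) ^ e⁻¹ :=
    hg0.mono fun s hs => (Real.rpow_rpow_inv hs (by positivity)).symm
  refine (hg_root.trans_isTheta hroot).trans_eventuallyEq (.of_forall fun s => ?_)
  dsimp only
  rw [zero_add, Real.rpow_one, he]
  congr 1
  field_simp

end InvSqrtODE

lemma isTheta_one_div_sqrt {Φ : ℝ → ℝ} {b : ℝ} (hΦ : Φ =Θ[atTop] fun s => s ^ b)
    (hΦ0 : ∀ᶠ s in atTop, 0 ≤ Φ s) :
    (fun s => 1 / √(Φ s)) =Θ[atTop] fun s => s ^ (-(b / 2)) := by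
  simp only [one_div]
  refine (hΦ.sqrt hΦ0 (eventually_ge_atTop 0 |>.mono fun s hs => Real.rpow_nonneg hs b)).inv
    |>.trans_eventuallyEq ?_
  filter_upwards [eventually_ge_atTop 0] with s hs
  rw [Real.sqrt_eq_rpow, ← Real.rpow_mul hs, Real.rpow_neg hs]
  ring_nf

lemma Asymptotics.IsTheta.integrableAtFilter_iff {α E F : Type*} [MeasurableSpace α]
    [NormedAddCommGroup E] [NormedAddCommGroup F] {l : Filter α} [l.IsMeasurablyGenerated]
    {μ : Measure α} {f : α → E} {g : α → F} (h : f =Θ[l] g) (hf : StronglyMeasurableAtFilter f l μ)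
    (hg : StronglyMeasurableAtFilter g l μ) :
    IntegrableAtFilter f l μ ↔ IntegrableAtFilter g l μ :=
  ⟨h.symm.isBigO.integrableAtFilter hg, h.isBigO.integrableAtFilter hf⟩

lemma integrableAtFilter_one_div_sqrt_nhdsGT {φ : ℝ → ℝ} {x₀ d : ℝ} (hφ : Measurable φ)
    (hφx₀ : φ x₀ = 0) (hd : HasDerivAt φ d x₀) (hd0 : 0 < d) :
    IntegrableAtFilter (fun x => 1 / √(φ x)) (𝓝[>] x₀) := by
  have hslope : ∀ᶠ x in 𝓝[>] x₀, d / 2 < slope φ x₀ x :=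
    (hasDerivAt_iff_tendsto_slope.1 hd |>.mono_left
      (nhdsWithin_mono _ fun x hx => ne_of_gt hx)) |>.eventually (lt_mem_nhds (half_lt_self hd0))
  have hbound : (fun x => 1 / √(φ x)) =O[𝓝[>] x₀] fun x => (x - x₀) ^ (-(1 / 2) : ℝ) := by
    refine IsBigO.of_bound (√(d / 2))⁻¹ ?_
    filter_upwards [hslope, self_mem_nhdsWithin] with x hx (hxx₀ : x₀ < x)
    have hx' := sub_pos.2 hxx₀
    rw [slope_def_field, hφx₀, sub_zero, lt_div_iff₀ hx'] at hx
    rw [Real.norm_of_nonneg (by positivity), Real.norm_of_nonneg (by positivity),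
      Real.rpow_neg hx'.le, ← Real.sqrt_eq_rpow, one_div, ← mul_inv,
      ← Real.sqrt_mul (by positivity)]
    exact inv_anti₀ (by positivity) (Real.sqrt_le_sqrt hx.le)
  refine hbound.integrableAtFilter
    (measurable_const.div hφ.sqrt).stronglyMeasurable.stronglyMeasurableAtFilter
    ⟨Ioc x₀ (x₀ + 1), Ioc_mem_nhdsGT (by linarith), ?_⟩
  have := (intervalIntegral.intervalIntegrable_rpow' (a := 0) (b := 1) (r := -(1 / 2))
    (by norm_num)).comp_sub_right x₀
  rw [zero_add, add_comm] at this
  exact (intervalIntegrable_iff_integrableOn_Ioc_of_le (by linarith)).1 this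

lemma continuous_integral_comp {f g : ℝ → ℝ} (hf : Continuous f) (hg : Continuous g) (r : ℝ) :
    Continuous fun s => ∫ τ in r..g s, f τ :=
  (intervalIntegral.continuous_primitive (fun _ _ => hf.intervalIntegrable _ _) r).comp hg

theorem integrableAtFilter_one_div_sqrt_integral_iff {a f g : ℝ → ℝ} {k p A L : ℝ}
    (ha : Continuous a) (ha_pos : ∀ x, 0 < a x) (hg : ∀ s, HasDerivAt g (1 / √(a (g s))) s)
    (hf : Continuous f) {r : ℝ} (hfr : ∀ t, r ≤ t → 0 ≤ f t) (hk : 0 ≤ k) (hp : 0 ≤ p)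
    (hA : 0 < A) (hL : 0 < L) (haAsym : Tendsto (fun t => a t / t ^ k) atTop (𝓝 A))
    (hfAsym : Tendsto (fun t => f t / t ^ p) atTop (𝓝 L)) :
    IntegrableAtFilter (fun s => 1 / √(∫ τ in r..g s, f τ)) atTop ↔ k + 1 < p := by
  have hgtop := tendsto_atTop_of_hasDerivAt_inv_sqrt ha ha_pos hg
  have hF : (fun t => ∫ τ in r..t, f τ) =Θ[atTop] fun t => t ^ (p + 1) :=
    isTheta_rpow_add_one_of_hasDerivAt hp hL
      (fun t => (hf.integral_hasStrictDerivAt r t).hasDerivAt) hfAsym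
  have hΦ : (fun s => ∫ τ in r..g s, f τ) =Θ[atTop] fun s => s ^ (2 / (k + 2) * (p + 1)) :=
    IsTheta.trans ⟨hF.isBigO.comp_tendsto hgtop, hF.symm.isBigO.comp_tendsto hgtop⟩ <|
      ((isTheta_rpow_of_hasDerivAt_inv_sqrt ha ha_pos hg hk hA haAsym).rpow
        (hgtop.eventually (eventually_ge_atTop 0))
        (eventually_ge_atTop 0 |>.mono fun s hs => Real.rpow_nonneg hs _)).trans_eventuallyEq <|
      eventually_ge_atTop 0 |>.mono fun s hs => (Real.rpow_mul hs _ _).symm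
  have hΦ0 : ∀ᶠ s in atTop, 0 ≤ ∫ τ in r..g s, f τ :=
    hgtop.eventually (eventually_ge_atTop r) |>.mono fun s hs =>
      intervalIntegral.integral_nonneg hs fun t ht => hfr t ht.1
  have hmeas : Measurable fun s => 1 / √(∫ τ in r..g s, f τ) :=
    measurable_const.div (continuous_integral_comp hf
      (continuous_iff_continuousAt.2 fun s => (hg s).continuousAt) r).measurable.sqrt
  rw [(isTheta_one_div_sqrt hΦ hΦ0).integrableAtFilter_iff
    hmeas.stronglyMeasurable.stronglyMeasurableAtFilter
    (measurable_id.pow_const _).stronglyMeasurable.stronglyMeasurableAtFilter,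
    integrableAtFilter_rpow_atTop_iff, neg_lt_neg_iff,
    show 2 / (k + 2) * (p + 1) / 2 = (p + 1) / (k + 2) by field_simp, one_lt_div (by linarith)]
  constructor <;> intro h <;> linarith

lemma integrableOn_Ici_one_div_sqrt_integral_iff {a f g : ℝ → ℝ} (ha_pos : ∀ x, 0 < a x)
    (hg : ∀ s, HasDerivAt g (1 / √(a (g s))) s) (hf : Continuous f) {r s₀ : ℝ} (hs₀ : g s₀ = r)
    (hfr : ∀ t, r ≤ t → 0 < f t) :
    IntegrableOn (fun s => 1 / √(∫ τ in r..g s, f τ)) (Ici s₀) ↔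
      IntegrableAtFilter (fun s => 1 / √(∫ τ in r..g s, f τ)) atTop := by
  refine ⟨fun h => ⟨_, Ici_mem_atTop _, h⟩, fun h => ?_⟩
  have hΦ := continuous_integral_comp hf
    (continuous_iff_continuousAt.2 fun s => (hg s).continuousAt) r
  have hΦ_pos : ∀ s, s₀ < s → 0 < ∫ τ in r..g s, f τ := fun s hs =>
    intervalIntegral.intervalIntegral_pos_of_pos_on (hf.intervalIntegrable _ _)
      (fun t ht => hfr t ht.1.le) (hs₀ ▸ strictMono_of_hasDerivAt_inv_sqrt ha_pos hg hs)
  have hderiv := (hf.integral_hasStrictDerivAt r _).hasDerivAt.comp _ (hg s₀)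
  rw [hs₀] at hderiv
  have hnear := integrableAtFilter_one_div_sqrt_nhdsGT hΦ.measurable (by simp [hs₀]) hderiv
    (by have := hfr r le_rfl; have := ha_pos r; positivity)
  refine (integrableOn_Ici_iff_integrableOn_Ioi).2
    (integrableOn_Ioi_iff_integrableAtFilter_atTop_nhdsWithin.2 ⟨h, hnear, ?_⟩)
  exact ContinuousOn.locallyIntegrableOn (fun s hs => (continuousAt_const.div
    (Real.continuous_sqrt.continuousAt.comp hΦ.continuousAt)
    (Real.sqrt_pos.2 (hΦ_pos s hs)).ne').continuousWithinAt) measurableSet_Ioi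

theorem stmt_6_general (a f g ginv : ℝ → ℝ) (ha : ContDiff ℝ 1 a) (ν : ℝ) (hν : 0 < ν)
    (hab : ∀ s, ν ≤ a s) (hf : ContDiff ℝ 1 f)
    (hg : ∀ s, HasDerivAt g (1 / Real.sqrt (a (g s))) s)
    (hinv2 : ∀ t, g (ginv t) = t)
    (k p aInf fInf : ℝ) (hk : 0 < k) (hp : 1 < p) (haInf : 0 < aInf) (hfInf : 0 < fInf)
    (haAsym : Tendsto (fun s => a s / s ^ k) atTop (𝓝 aInf))
    (hfAsym : Tendsto (fun s => f s / s ^ p) atTop (𝓝 fInf)) :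
    (∃ r : ℝ, 0 < f r ∧ (∀ s, r < s → 0 ≤ f s) ∧
      IntegrableOn (fun s => 1 / Real.sqrt (∫ τ in r..(g s), f τ))
        (Set.Ici (ginv r))) ↔ k + 1 < p := by
  have ha_pos : ∀ x, 0 < a x := fun x => hν.trans_le (hab x)
  have hatTop_iff {r : ℝ} (hfr : ∀ t, r ≤ t → 0 ≤ f t) :=
    integrableAtFilter_one_div_sqrt_integral_iff ha.continuous ha_pos hg hf.continuous hfr hk.le
      (by linarith) haInf hfInf haAsym hfAsym
  constructor
  · rintro ⟨r, hfr, hfr', hint⟩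
    exact (hatTop_iff fun t ht => ht.eq_or_lt.elim (· ▸ hfr.le) (hfr' t)).1
      ⟨_, Ici_mem_atTop _, hint⟩
  · intro hkp
    obtain ⟨r, hr⟩ : ∃ r, ∀ t, r ≤ t → 0 < f t :=
      ((eventually_bounds_of_tendsto_div_rpow hfInf hfAsym).and (eventually_gt_atTop 0)).mono
        (fun t ⟨hft, ht⟩ => lt_of_lt_of_le (by positivity) hft.1) |>.exists_forall_of_atTop
    refine ⟨r, hr r le_rfl, fun t ht => (hr t ht.le).le, ?_⟩
    exact (integrableOn_Ici_one_div_sqrt_integral_iff ha_pos hg hf.continuous (hinv2 r) hr).2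
      ((hatTop_iff fun t ht => (hr t ht).le).2 hkp)

theorem stmt_6 (a f g ginv : ℝ → ℝ) (ha : ContDiff ℝ 1 a) (ν : ℝ) (hν : 0 < ν)
    (hab : ∀ s, ν ≤ a s) (hf : ContDiff ℝ 1 f)
    (hg : ∀ s, HasDerivAt g (1 / Real.sqrt (a (g s))) s) (hg0 : g 0 = 0)
    (hinv1 : ∀ s, ginv (g s) = s) (hinv2 : ∀ t, g (ginv t) = t)
    (k p aInf fInf : ℝ) (hk : 0 < k) (hp : 1 < p) (haInf : 0 < aInf) (hfInf : 0 < fInf)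
    (haAsym : Tendsto (fun s => a s / s ^ k) atTop (𝓝 aInf))
    (hfAsym : Tendsto (fun s => f s / s ^ p) atTop (𝓝 fInf)) :
    (∃ r : ℝ, 0 < f r ∧ (∀ s, r < s → 0 ≤ f s) ∧
      IntegrableOn (fun s => 1 / Real.sqrt (∫ τ in r..(g s), f τ))
        (Set.Ici (ginv r))) ↔ k + 1 < p :=
  stmt_6_general a f g ginv ha ν hν hab hf hg hinv2 k p aInf fInf hk hp haInf hfInf haAsym hfAsym
end

section
/- Assume a(s)/e^{2γs} → a_∞ and f(s)/e^{2βs} → f_∞ as s → +∞ with γ, β, a_∞, f_∞ > 0. Then the Keller–Osserman condition (existence of r with f(r) > 0, f ≥ 0 on (r,∞), and ∫_{g⁻¹(r)}^{+∞} ds/√(F(g(s))) < ∞ with F(t) = ∫_r^t f) holds if β > γ, and fails (the integral diverges for every admissible r) if β < γ. -/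
open Filter Topology MeasureTheory Real Set Function

/-!
The substitution `t = g s`, for which `ds = √(a t) dt`, turns the Keller–Osserman integral into
`∫_r^∞ √(a t) / √(F t) dt`. As `t → ∞`, `√(a t) ≍ e^{γ t}` while `F t ≍ e^{2β t}`, so the
integrand is comparable to `e^{(γ - β) t}`: integrable when `γ < β`, bounded below by a positive
constant when `β < γ`. Near `t = r` the integrand is harmless, since `f > 0` there makes `F` grow at
least linearly and the singularity is at worst `(t - r)^{-1/2}`.
-/

theorem strictMono_and_hasDerivAt_sqrt_of_inverse {a g ginv : ℝ → ℝ} (ha : ∀ t, 0 < a t)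
    (hg : ∀ s, HasDerivAt g (1 / √(a (g s))) s) (hinv1 : ∀ s, ginv (g s) = s)
    (hinv2 : ∀ t, g (ginv t) = t) :
    StrictMono ginv ∧ ∀ t, HasDerivAt ginv (√(a t)) t := by
  have hg_mono : StrictMono g :=
    strictMono_of_hasDerivAt_pos hg fun s => one_div_pos.mpr (sqrt_pos.mpr (ha _))
  have hmono : StrictMono ginv := fun t₁ t₂ h => by rwa [← hg_mono.lt_iff_lt, hinv2, hinv2]
  have hcont : Continuous ginv :=
    hmono.monotone.continuous_of_surjective fun s => ⟨g s, hinv1 s⟩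
  refine ⟨hmono, fun t => ?_⟩
  have hgt : HasDerivAt g (1 / √(a t)) (ginv t) := by simpa only [hinv2] using hg (ginv t)
  simpa using hgt.of_local_left_inverse hcont.continuousAt
    (one_div_pos.mpr (sqrt_pos.mpr (ha t))).ne' (Eventually.of_forall hinv2)

theorem integrableOn_Ici_iff_of_strictMono {φ φ' : ℝ → ℝ} (hφ : StrictMono φ)
    (hsurj : Surjective φ) (hφ' : ∀ t, HasDerivAt φ (φ' t) t) (hnn : ∀ t, 0 ≤ φ' t)
    (h : ℝ → ℝ) (r : ℝ) :
    IntegrableOn h (Ici (φ r)) ↔ IntegrableOn (fun t => φ' t * h (φ t)) (Ici r) := by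
  have himage : φ '' Ici r = Ici (φ r) := by
    simpa using (hφ.orderIsoOfSurjective φ hsurj).image_Ici r
  rw [← himage, integrableOn_image_iff_integrableOn_abs_deriv_smul measurableSet_Ici
    (fun t _ => (hφ' t).hasDerivWithinAt) hφ.injective.injOn]
  simp only [abs_of_nonneg (hnn _), smul_eq_mul]

theorem eventually_mul_le_of_tendsto_div {α : Type*} {l : Filter α} {u e : α → ℝ} {L c : ℝ}
    (he : ∀ s, 0 < e s) (h : Tendsto (fun s => u s / e s) l (𝓝 L)) (hc : c < L) :
    ∀ᶠ s in l, c * e s ≤ u s :=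
  (h.eventually (eventually_gt_nhds hc)).mono fun s hs => ((lt_div_iff₀ (he s)).mp hs).le

theorem eventually_le_mul_of_tendsto_div {α : Type*} {l : Filter α} {u e : α → ℝ} {L C : ℝ}
    (he : ∀ s, 0 < e s) (h : Tendsto (fun s => u s / e s) l (𝓝 L)) (hC : L < C) :
    ∀ᶠ s in l, u s ≤ C * e s :=
  (h.eventually (eventually_lt_nhds hC)).mono fun s hs => ((div_lt_iff₀ (he s)).mp hs).le

theorem integral_exp_mul (k u v : ℝ) (hk : k ≠ 0) :
    ∫ τ in u..v, exp (k * τ) = (exp (k * v) - exp (k * u)) / k := by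
  rw [intervalIntegral.integral_comp_mul_left (fun x => exp x) hk, integral_exp, smul_eq_mul,
    inv_mul_eq_div]

theorem integral_pos_of_pos_of_nonneg {f : ℝ → ℝ} (hf : Continuous f) {r t : ℝ} (hrt : r < t)
    (hfr : 0 < f r) (hfnn : ∀ s, r < s → 0 ≤ f s) : 0 < ∫ τ in r..t, f τ := by
  obtain ⟨u, hru, hu⟩ :=
    exists_Ico_subset_of_mem_nhds (hf.continuousAt.eventually (lt_mem_nhds hfr)) ⟨t, hrt⟩
  have hnn : 0 ≤ᵐ[volume.restrict (uIoc r t)] f := by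
    rw [uIoc_of_le hrt.le, EventuallyLE, ae_restrict_iff' measurableSet_Ioc]
    exact Eventually.of_forall fun s hs => hfnn s hs.1
  rw [intervalIntegral.integral_pos_iff_support_of_nonneg_ae' hnn (hf.intervalIntegrable r t)]
  refine ⟨hrt, ((Measure.measure_Ioo_pos _).mpr (lt_min hru hrt)).trans_le
    (measure_mono fun s hs => ?_)⟩
  exact ⟨(hu ⟨hs.1.le, hs.2.trans_le (min_le_left _ _)⟩).ne', hs.1,
    (hs.2.trans_le (min_le_right _ _)).le⟩

theorem integral_le_mul_exp_of_le_mul_exp {f : ℝ → ℝ} (hf : Continuous f) {k C R : ℝ}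
    (hk : 0 < k) (hC : 0 ≤ C) (hfR : ∀ t, R ≤ t → f t ≤ C * exp (k * t)) (r : ℝ) :
    ∃ K, ∀ t, R ≤ t → ∫ τ in r..t, f τ ≤ K * exp (k * t) := by
  set F := fun t => ∫ τ in r..t, f τ
  refine ⟨|F R| * exp (-(k * R)) + C / k, fun t ht => ?_⟩
  have htail : ∫ τ in R..t, f τ ≤ C * ((exp (k * t) - exp (k * R)) / k) := by
    rw [← integral_exp_mul k R t hk.ne', ← intervalIntegral.integral_const_mul]
    exact intervalIntegral.integral_mono_on ht (hf.intervalIntegrable R t)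
      ((by fun_prop : Continuous _).intervalIntegrable R t) fun τ hτ => hfR τ hτ.1
  have hhead : F R ≤ |F R| * exp (-(k * R)) * exp (k * t) := by
    rw [mul_assoc, ← exp_add]
    exact (le_abs_self _).trans
      (le_mul_of_one_le_right (abs_nonneg _) (one_le_exp (by nlinarith)))
  have hdrop : C * ((exp (k * t) - exp (k * R)) / k) ≤ C / k * exp (k * t) := by
    rw [mul_div_assoc', div_mul_eq_mul_div]
    gcongr
    linarith [exp_pos (k * R)]
  calc F t = F R + ∫ τ in R..t, f τ :=
        (intervalIntegral.integral_add_adjacent_intervals (hf.intervalIntegrable r R)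
          (hf.intervalIntegrable R t)).symm
    _ ≤ _ := by linarith

theorem mul_exp_sub_le_integral {f : ℝ → ℝ} (hf : Continuous f) {k c r t : ℝ} (hk : k ≠ 0)
    (hfr : ∀ s, r ≤ s → c * exp (k * s) ≤ f s) (hrt : r ≤ t) :
    c * ((exp (k * t) - exp (k * r)) / k) ≤ ∫ τ in r..t, f τ := by
  rw [← integral_exp_mul k r t hk, ← intervalIntegral.integral_const_mul]
  exact intervalIntegral.integral_mono_on hrt
    ((by fun_prop : Continuous _).intervalIntegrable r t) (hf.intervalIntegrable r t)
    fun s hs => hfr s hs.1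

theorem sqrt_mul_exp_div_sqrt_mul_exp (A C γ β t : ℝ) :
    √(A * exp (2 * γ * t)) / √(C * exp (2 * β * t)) = √A / √C * exp ((γ - β) * t) := by
  rw [sqrt_mul' _ (exp_pos _).le, sqrt_mul' _ (exp_pos _).le, ← exp_half, ← exp_half,
    sub_mul, exp_sub, mul_div_mul_comm]
  ring_nf

theorem not_integrableOn_Ici_of_pos_le {h : ℝ → ℝ} {c R : ℝ} (hc : 0 < c)
    (hle : ∀ t, R ≤ t → c ≤ h t) : ¬ IntegrableOn h (Ici R) := by
  intro hI
  have hconst : IntegrableOn (fun _ => c) (Ici R) := by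
    refine hI.mono' aestronglyMeasurable_const ((ae_restrict_iff' measurableSet_Ici).mpr ?_)
    exact Eventually.of_forall fun t ht => by
      rw [norm_of_nonneg hc.le]; exact hle t ht
  simp [hc.ne'] at hconst

theorem integrableOn_Ioc_of_le_div_sqrt_sub {h : ℝ → ℝ} {r b M : ℝ}
    (hm : AEStronglyMeasurable h (volume.restrict (Ioc r b)))
    (hle : ∀ t ∈ Ioc r b, ‖h t‖ ≤ M / √(t - r)) : IntegrableOn h (Ioc r b) := by
  rcases le_or_gt b r with hbr | hrb
  · simp [Ioc_eq_empty_of_le hbr]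
  have hrpow : IntervalIntegrable (fun t => (t - r) ^ (-(1 / 2) : ℝ)) volume r b := by
    simpa using (intervalIntegral.intervalIntegrable_rpow' (r := -(1 / 2)) (by norm_num)
      (a := 0) (b := b - r)).comp_sub_right r
  have hmaj : IntegrableOn (fun t => M / √(t - r)) (Ioc r b) := by
    refine IntegrableOn.congr_fun
      (((intervalIntegrable_iff_integrableOn_Ioc_of_le hrb.le).mp hrpow).const_mul M)
      (fun t ht => ?_) measurableSet_Ioc
    rw [sqrt_eq_rpow, rpow_neg (by linarith [ht.1]), ← div_eq_mul_inv]
  exact hmaj.integrable.mono' hm ((ae_restrict_iff' measurableSet_Ioc).mpr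
    (Eventually.of_forall hle))

theorem integrableOn_sqrt_div_sqrt_integral {a f : ℝ → ℝ} (ha : Continuous a)
    (hf : Continuous f) {r A c γ β : ℝ} (hc : 0 < c) (hβ : 0 < β) (hγβ : γ < β)
    (har : ∀ t, r ≤ t → a t ≤ A * exp (2 * γ * t))
    (hfr : ∀ t, r ≤ t → c * exp (2 * β * t) ≤ f t) :
    IntegrableOn (fun t => √(a t) / √(∫ τ in r..t, f τ)) (Ici r) := by
  set F := fun t => ∫ τ in r..t, f τ
  have hFcont : Continuous F :=
    intervalIntegral.continuous_primitive (fun u v => hf.intervalIntegrable u v) r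
  have hmeas : AEStronglyMeasurable (fun t => √(a t) / √(F t)) volume :=
    (ha.sqrt.measurable.div hFcont.sqrt.measurable).aestronglyMeasurable
  have hlow : ∀ t, r ≤ t → c * ((exp (2 * β * t) - exp (2 * β * r)) / (2 * β)) ≤ F t :=
    fun t ht => mul_exp_sub_le_integral hf (by positivity) hfr ht
  rw [integrableOn_Ici_iff_integrableOn_Ioi, ← Ioc_union_Ioi_eq_Ioi (by linarith : r ≤ r + 1)]
  refine IntegrableOn.union ?_ ?_
  · obtain ⟨M, hM⟩ := isCompact_Icc.exists_bound_of_continuousOn (s := Icc r (r + 1))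
      ha.sqrt.continuousOn
    set c₀ := c * exp (2 * β * r)
    refine integrableOn_Ioc_of_le_div_sqrt_sub hmeas.restrict (M := M / √c₀) fun t ht => ?_
    have htr : 0 < t - r := sub_pos.mpr ht.1
    have hMt : √(a t) ≤ M := (le_norm_self _).trans (hM t (Ioc_subset_Icc_self ht))
    have hlin : c₀ * (t - r) ≤ F t := by
      have hconv : exp (2 * β * r) * (2 * β * (t - r) + 1) ≤ exp (2 * β * t) := by
        rw [show 2 * β * t = 2 * β * (t - r) + 2 * β * r by ring, exp_add, mul_comm]
        exact mul_le_mul_of_nonneg_right (add_one_le_exp _) (exp_pos _).le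
      refine le_trans ?_ (hlow t ht.1.le)
      rw [mul_assoc]
      gcongr
      rw [le_div_iff₀ (by positivity)]
      nlinarith
    rw [norm_of_nonneg (by positivity), div_div, ← sqrt_mul (by positivity)]
    exact div_le_div₀ ((norm_nonneg _).trans (hM r ⟨le_rfl, by linarith⟩)) hMt
      (sqrt_pos.mpr (by positivity)) (sqrt_le_sqrt hlin)
  · set c₁ := c * (1 - exp (-(2 * β))) / (2 * β)
    have hc₁ : 0 < c₁ := by
      have : exp (-(2 * β)) < 1 := exp_lt_one_iff.mpr (by linarith)
      have : 0 < 1 - exp (-(2 * β)) := by linarith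
      positivity
    refine ((exp_neg_integrableOn_Ioi (r + 1) (sub_pos.mpr hγβ)).const_mul
      (√A / √c₁)).mono' hmeas.restrict ((ae_restrict_iff' measurableSet_Ioi).mpr
      (Eventually.of_forall fun t ht => ?_))
    have hexp : c₁ * exp (2 * β * t) ≤ F t := by
      have hr : exp (2 * β * r) ≤ exp (-(2 * β)) * exp (2 * β * t) := by
        rw [← exp_add]
        exact exp_le_exp.mpr (by nlinarith [mem_Ioi.mp ht])
      calc c₁ * exp (2 * β * t)
          = c * ((1 - exp (-(2 * β))) * exp (2 * β * t) / (2 * β)) := by ring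
        _ ≤ c * ((exp (2 * β * t) - exp (2 * β * r)) / (2 * β)) := by gcongr; linarith
        _ ≤ F t := hlow t (by linarith [mem_Ioi.mp ht])
    rw [norm_of_nonneg (by positivity), neg_sub, ← sqrt_mul_exp_div_sqrt_mul_exp]
    exact div_le_div₀ (sqrt_nonneg _) (sqrt_le_sqrt (har t (by linarith [mem_Ioi.mp ht])))
      (sqrt_pos.mpr (by positivity)) (sqrt_le_sqrt hexp)

theorem not_integrableOn_sqrt_div_sqrt_integral {a f : ℝ → ℝ} (hf : Continuous f)
    {r R A C γ β : ℝ} (hA : 0 < A) (hC : 0 ≤ C) (hβ : 0 < β) (hβγ : β < γ) (hrR : r ≤ R)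
    (hFpos : ∀ t, R ≤ t → 0 < ∫ τ in r..t, f τ)
    (haR : ∀ t, R ≤ t → A * exp (2 * γ * t) ≤ a t)
    (hfR : ∀ t, R ≤ t → f t ≤ C * exp (2 * β * t)) :
    ¬ IntegrableOn (fun t => √(a t) / √(∫ τ in r..t, f τ)) (Ici r) := by
  obtain ⟨K, hK⟩ := integral_le_mul_exp_of_le_mul_exp hf (by positivity) hC hfR r
  have hKpos : 0 < K := pos_of_mul_pos_left ((hFpos R le_rfl).trans_le (hK R le_rfl))
    (exp_pos _).le
  refine fun hI => not_integrableOn_Ici_of_pos_le (sqrt_pos.mpr (div_pos hA hKpos))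
    (fun t ht => ?_) (hI.mono_set (Ici_subset_Ici.mpr (hrR.trans (le_max_left R 0))))
  have htR : R ≤ t := (le_max_left R 0).trans ht
  calc √(A / K) ≤ √A / √K * exp ((γ - β) * t) := by
        rw [sqrt_div' _ hKpos.le]
        exact le_mul_of_one_le_right (by positivity)
          (one_le_exp (mul_nonneg (by linarith) ((le_max_right R 0).trans ht)))
    _ = √(A * exp (2 * γ * t)) / √(K * exp (2 * β * t)) :=
        (sqrt_mul_exp_div_sqrt_mul_exp A K γ β t).symm
    _ ≤ √(a t) / √(∫ τ in r..t, f τ) :=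
        div_le_div₀ (sqrt_nonneg _) (sqrt_le_sqrt (haR t htR)) (sqrt_pos.mpr (hFpos t htR))
          (sqrt_le_sqrt (hK t htR))

theorem stmt_7_general (a f g ginv : ℝ → ℝ) (ha : ContDiff ℝ 1 a) (ν : ℝ) (hν : 0 < ν)
    (hab : ∀ s, ν ≤ a s) (hf : ContDiff ℝ 1 f)
    (hg : ∀ s, HasDerivAt g (1 / Real.sqrt (a (g s))) s)
    (hinv1 : ∀ s, ginv (g s) = s) (hinv2 : ∀ t, g (ginv t) = t)
    (γ β aInf fInf : ℝ) (hβ : 0 < β) (haInf : 0 < aInf) (hfInf : 0 < fInf)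
    (haAsym : Tendsto (fun s => a s / Real.exp (2 * γ * s)) atTop (𝓝 aInf))
    (hfAsym : Tendsto (fun s => f s / Real.exp (2 * β * s)) atTop (𝓝 fInf)) :
    (γ < β → ∃ r : ℝ, 0 < f r ∧ (∀ s, r < s → 0 ≤ f s) ∧
      IntegrableOn (fun s => 1 / Real.sqrt (∫ τ in r..(g s), f τ))
        (Set.Ici (ginv r))) ∧
    (β < γ → ∀ r : ℝ, 0 < f r → (∀ s, r < s → 0 ≤ f s) →
      ¬ IntegrableOn (fun s => 1 / Real.sqrt (∫ τ in r..(g s), f τ))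
        (Set.Ici (ginv r))) := by
  obtain ⟨hmono, hderiv⟩ := strictMono_and_hasDerivAt_sqrt_of_inverse
    (fun t => hν.trans_le (hab t)) hg hinv1 hinv2
  have hsubst : ∀ r, IntegrableOn (fun s => 1 / √(∫ τ in r..(g s), f τ)) (Ici (ginv r)) ↔
      IntegrableOn (fun t => √(a t) / √(∫ τ in r..t, f τ)) (Ici r) := fun r => by
    simpa only [hinv2, mul_one_div] using integrableOn_Ici_iff_of_strictMono hmono
      (fun s => ⟨g s, hinv1 s⟩) hderiv (fun t => sqrt_nonneg _)
      (fun s => 1 / √(∫ τ in r..(g s), f τ)) r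
  have hexp : ∀ k s, 0 < exp (k * s) := fun _ _ => exp_pos _
  refine ⟨fun hγβ => ?_, fun hβγ r hfr hfnn => ?_⟩
  · obtain ⟨R, hR⟩ := eventually_atTop.mp <|
      (eventually_mul_le_of_tendsto_div (hexp _) hfAsym (half_lt_self hfInf)).and
        (eventually_le_mul_of_tendsto_div (hexp _) haAsym (lt_two_mul_self haInf))
    have hfR : ∀ s, R ≤ s → 0 < f s := fun s hs =>
      (mul_pos (half_pos hfInf) (exp_pos _)).trans_le (hR s hs).1
    refine ⟨R, hfR R le_rfl, fun s hs => (hfR s hs.le).le, (hsubst R).mpr ?_⟩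
    exact integrableOn_sqrt_div_sqrt_integral ha.continuous hf.continuous (half_pos hfInf) hβ hγβ
      (fun t ht => (hR t ht).2) (fun t ht => (hR t ht).1)
  · obtain ⟨R, hR⟩ := eventually_atTop.mp <|
      (eventually_mul_le_of_tendsto_div (hexp _) haAsym (half_lt_self haInf)).and
        (eventually_le_mul_of_tendsto_div (hexp _) hfAsym (lt_two_mul_self hfInf))
    set R' := max R (r + 1)
    have hR' : ∀ t, R' ≤ t → R ≤ t ∧ r < t := fun t ht =>
      ⟨(le_max_left _ _).trans ht, by linarith [(le_max_right R (r + 1)).trans ht]⟩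
    rw [hsubst]
    exact not_integrableOn_sqrt_div_sqrt_integral hf.continuous (half_pos haInf) (by positivity)
      hβ hβγ (hR' R' le_rfl).2.le
      (fun t ht => integral_pos_of_pos_of_nonneg hf.continuous (hR' t ht).2 hfr hfnn)
      (fun t ht => (hR t (hR' t ht).1).1) (fun t ht => (hR t (hR' t ht).1).2)

theorem stmt_7 (a f g ginv : ℝ → ℝ) (ha : ContDiff ℝ 1 a) (ν : ℝ) (hν : 0 < ν)
    (hab : ∀ s, ν ≤ a s) (hf : ContDiff ℝ 1 f)
    (hg : ∀ s, HasDerivAt g (1 / Real.sqrt (a (g s))) s) (hg0 : g 0 = 0)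
    (hinv1 : ∀ s, ginv (g s) = s) (hinv2 : ∀ t, g (ginv t) = t)
    (γ β aInf fInf : ℝ) (hγ : 0 < γ) (hβ : 0 < β) (haInf : 0 < aInf) (hfInf : 0 < fInf)
    (haAsym : Tendsto (fun s => a s / Real.exp (2 * γ * s)) atTop (𝓝 aInf))
    (hfAsym : Tendsto (fun s => f s / Real.exp (2 * β * s)) atTop (𝓝 fInf)) :
    (γ < β → ∃ r : ℝ, 0 < f r ∧ (∀ s, r < s → 0 ≤ f s) ∧
      IntegrableOn (fun s => 1 / Real.sqrt (∫ τ in r..(g s), f τ))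
        (Set.Ici (ginv r))) ∧
    (β < γ → ∀ r : ℝ, 0 < f r → (∀ s, r < s → 0 ≤ f s) →
      ¬ IntegrableOn (fun s => 1 / Real.sqrt (∫ τ in r..(g s), f τ))
        (Set.Ici (ginv r))) :=
  stmt_7_general a f g ginv ha ν hν hab hf hg hinv1 hinv2 γ β aInf fInf hβ haInf hfInf haAsym hfAsym
end

section
/- Assume a(s)/e^{2γs} → a_∞ and f(s)/s^p → f_∞ as s → +∞ with γ, p, a_∞, f_∞ > 0. Then for every r ∈ ℝ with f(r) > 0 and f ≥ 0 on (r,∞), the integral ∫_{g⁻¹(r)}^{+∞} ds/√(F(g(s))) diverges, where F(t) = ∫_r^t f. -/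
/-!
Along the curve `g`, the chain rule gives `(F ∘ g)' = f(g) / √(a(g))`. Since `f` grows like a
power and `√a` like an exponential, this derivative tends to `0`, so `F(g s)` grows at most
linearly in `s`. As `F > 0` on `(r, ∞)` and `g → ∞`, the integrand `1 / √(F(g s))` is eventually
at least `1 / s`, which is not integrable at infinity.
-/

open Filter Topology MeasureTheory

theorem intervalIntegral_pos_of_pos_left_of_nonneg {f : ℝ → ℝ} {r t : ℝ} (hf : Continuous f)
    (hr : 0 < f r) (hnn : ∀ s, r < s → 0 ≤ f s) (hrt : r < t) : 0 < ∫ x in r..t, f x := by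
  obtain ⟨l, u, ⟨hlr, hru⟩, hpos⟩ :=
    (hf.continuousAt.eventually (lt_mem_nhds hr)).exists_Ioo_subset
  have hnn' : 0 ≤ᵐ[volume.restrict (Set.uIoc r t)] f := by
    rw [Set.uIoc_of_le hrt.le]
    exact (ae_restrict_iff' measurableSet_Ioc).2 (.of_forall fun s hs => hnn s hs.1)
  rw [intervalIntegral.integral_pos_iff_support_of_nonneg_ae' hnn' (hf.intervalIntegrable _ _)]
  refine ⟨hrt, ((Measure.measure_Ioo_pos _).2 (lt_min hru hrt)).trans_le (measure_mono ?_)⟩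
  intro s ⟨hrs, hs⟩
  exact ⟨(hpos ⟨hlr.trans hrs, hs.trans_le (min_le_left _ _)⟩).ne', hrs,
    (hs.trans_le (min_le_right _ _)).le⟩

theorem tendsto_div_sqrt_of_tendsto_div_rpow_of_tendsto_div_exp {f a : ℝ → ℝ}
    {γ p aInf fInf : ℝ} (hγ : 0 < γ) (haInf : 0 < aInf)
    (ha : Tendsto (fun s => a s / Real.exp (2 * γ * s)) atTop (𝓝 aInf))
    (hf : Tendsto (fun s => f s / s ^ p) atTop (𝓝 fInf)) :
    Tendsto (fun s => f s / Real.sqrt (a s)) atTop (𝓝 0) := by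
  have hsqrt : Tendsto (fun s => Real.exp (γ * s) / Real.sqrt (a s)) atTop
      (𝓝 (Real.sqrt aInf)⁻¹) := by
    have := ((Real.continuous_sqrt.tendsto aInf).comp ha).inv₀ (Real.sqrt_pos.2 haInf).ne'
    refine this.congr fun s => ?_
    simp only [Function.comp_apply, Real.sqrt_div' _ (Real.exp_pos _).le, inv_div]
    rw [show 2 * γ * s = γ * s + γ * s by ring, Real.exp_add,
      Real.sqrt_mul_self (Real.exp_pos _).le]
  -- `f / √a = (f / s ^ p) * (s ^ p * exp (-γ s)) * (exp (γ s) / √a)`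
  have := (hf.mul (tendsto_rpow_mul_exp_neg_mul_atTop_nhds_zero p γ hγ)).mul hsqrt
  rw [mul_zero, zero_mul] at this
  refine this.congr' ?_
  filter_upwards [eventually_gt_atTop 0] with s hs
  have : s ^ p ≠ 0 := (Real.rpow_pos_of_pos hs p).ne'
  rw [neg_mul, Real.exp_neg]
  field_simp

theorem eventually_le_linear_of_hasDerivAt_le {φ φ' : ℝ → ℝ} {C : ℝ}
    (hφ : ∀ s, HasDerivAt φ (φ' s) s) (hle : ∀ᶠ s in atTop, φ' s ≤ C) :
    ∃ E, ∀ᶠ s in atTop, φ s ≤ C * s + E := by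
  obtain ⟨S, hS⟩ := eventually_atTop.1 hle
  refine ⟨φ S - C * S, (eventually_ge_atTop S).mono fun s hs => ?_⟩
  have := (convex_Ici S).image_sub_le_mul_sub_of_deriv_le
    (fun x _ => (hφ x).continuousAt.continuousWithinAt)
    (fun x _ => (hφ x).differentiableAt.differentiableWithinAt)
    (fun x hx => (hφ x).deriv ▸ hS x (interior_subset hx)) S Set.self_mem_Ici s hs hs
  linarith

theorem not_integrableOn_Ici_of_eventually_inv_le {u : ℝ → ℝ} {b : ℝ}
    (h : ∀ᶠ s in atTop, s⁻¹ ≤ u s) : ¬ IntegrableOn u (Set.Ici b) := by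
  intro hu
  obtain ⟨S, hS⟩ := eventually_atTop.1 (h.and (eventually_ge_atTop 1))
  refine not_integrableOn_Ici_inv (a := max S b) ?_
  refine Integrable.mono' (hu.mono_set (Set.Ici_subset_Ici.2 (le_max_right _ _)))
    measurable_inv.aestronglyMeasurable ?_
  filter_upwards [ae_restrict_mem measurableSet_Ici] with s hs
  obtain ⟨hinv, hs1⟩ := hS s (le_of_max_le_left hs)
  rwa [Real.norm_of_nonneg (inv_nonneg.2 (by linarith))]

theorem not_integrableOn_Ici_one_div_sqrt_of_le_linear {φ : ℝ → ℝ} {b C E : ℝ}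
    (hpos : ∀ᶠ s in atTop, 0 < φ s) (hle : ∀ᶠ s in atTop, φ s ≤ C * s + E) :
    ¬ IntegrableOn (fun s => 1 / Real.sqrt (φ s)) (Set.Ici b) := by
  refine not_integrableOn_Ici_of_eventually_inv_le ?_
  filter_upwards [hpos, hle, eventually_ge_atTop (max 1 (C + |E|))] with s hφ hφs hs
  have hs1 : 1 ≤ s := le_of_max_le_left hs
  -- `C * s + E ≤ (C + |E|) * s ≤ s ^ 2` once `s ≥ max 1 (C + |E|)`
  have hsq : φ s ≤ s * s := by
    nlinarith [le_of_max_le_right hs, le_abs_self E, abs_nonneg E]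
  rw [inv_eq_one_div]
  exact one_div_le_one_div_of_le (Real.sqrt_pos.2 hφ)
    ((Real.sqrt_le_sqrt hsq).trans_eq (Real.sqrt_mul_self (by linarith)))

theorem stmt_8_general (a f g ginv : ℝ → ℝ) (hf : ContDiff ℝ 1 f)
    (hg : ∀ s, HasDerivAt g (1 / Real.sqrt (a (g s))) s)
    (hinv2 : ∀ t, g (ginv t) = t)
    (γ p aInf fInf : ℝ) (hγ : 0 < γ) (haInf : 0 < aInf)
    (haAsym : Tendsto (fun s => a s / Real.exp (2 * γ * s)) atTop (𝓝 aInf))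
    (hfAsym : Tendsto (fun s => f s / s ^ p) atTop (𝓝 fInf)) :
    ∀ r : ℝ, 0 < f r → (∀ s, r < s → 0 ≤ f s) →
      ¬ IntegrableOn (fun s => 1 / Real.sqrt (∫ τ in r..(g s), f τ))
        (Set.Ici (ginv r)) := by
  intro r hr hrf
  have hfc : Continuous f := hf.continuous
  have hg_mono : Monotone g := monotone_of_deriv_nonneg (fun s => (hg s).differentiableAt)
    fun s => (hg s).deriv ▸ by positivity
  have hg_tendsto : Tendsto g atTop atTop := tendsto_atTop.2 fun t =>
    (eventually_ge_atTop (ginv t)).mono fun s hs => hinv2 t ▸ hg_mono hs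
  have hFg (s : ℝ) : HasDerivAt (fun s => ∫ τ in r..(g s), f τ)
      (f (g s) * (1 / Real.sqrt (a (g s)))) s :=
    (intervalIntegral.integral_hasDerivAt_right (hfc.intervalIntegrable _ _)
      (hfc.stronglyMeasurableAtFilter _ _) hfc.continuousAt).comp s (hg s)
  have hderiv_le : ∀ᶠ s in atTop, f (g s) * (1 / Real.sqrt (a (g s))) ≤ 1 := by
    have hdecay := tendsto_div_sqrt_of_tendsto_div_rpow_of_tendsto_div_exp hγ haInf haAsym hfAsym
    filter_upwards [(hdecay.comp hg_tendsto).eventually_le_const one_pos] with s hs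
    rwa [mul_one_div]
  obtain ⟨E, hE⟩ := eventually_le_linear_of_hasDerivAt_le hFg hderiv_le
  exact not_integrableOn_Ici_one_div_sqrt_of_le_linear
    ((hg_tendsto.eventually_gt_atTop r).mono fun s hs =>
      intervalIntegral_pos_of_pos_left_of_nonneg hfc hr hrf hs) hE

theorem stmt_8 (a f g ginv : ℝ → ℝ) (ha : ContDiff ℝ 1 a) (ν : ℝ) (hν : 0 < ν)
    (hab : ∀ s, ν ≤ a s) (hf : ContDiff ℝ 1 f)
    (hg : ∀ s, HasDerivAt g (1 / Real.sqrt (a (g s))) s) (hg0 : g 0 = 0)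
    (hinv1 : ∀ s, ginv (g s) = s) (hinv2 : ∀ t, g (ginv t) = t)
    (γ p aInf fInf : ℝ) (hγ : 0 < γ) (hp : 0 < p) (haInf : 0 < aInf) (hfInf : 0 < fInf)
    (haAsym : Tendsto (fun s => a s / Real.exp (2 * γ * s)) atTop (𝓝 aInf))
    (hfAsym : Tendsto (fun s => f s / s ^ p) atTop (𝓝 fInf)) :
    ∀ r : ℝ, 0 < f r → (∀ s, r < s → 0 ≤ f s) →
      ¬ IntegrableOn (fun s => 1 / Real.sqrt (∫ τ in r..(g s), f τ))
        (Set.Ici (ginv r)) :=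
  stmt_8_general a f g ginv hf hg hinv2 γ p aInf fInf hγ haInf haAsym hfAsym
end

section
/- Assume a(s)/(log s)^{2γ} → a_∞ and f(s)/s^p → f_∞ as s → +∞ with γ, a_∞, f_∞ > 0 and p > 0. Then the Keller–Osserman condition (existence of r with f(r) > 0, f ≥ 0 on (r,∞), and ∫_{g⁻¹(r)}^{+∞} ds/√(F(g(s))) < ∞ with F(t) = ∫_r^t f) holds if and only if p > 1. -/
open Filter Topology MeasureTheory

/-!
The substitution `t = g s`, for which `ds = √(a t) dt`, turns the Keller–Osserman integral
into `∫_r^∞ √(a t) / √(F t) dt` with `F t = ∫_r^t f`. As `f` grows like `t ^ p`, `F` grows like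
`t ^ (p + 1)`, while `a` grows only like a power of `log t`. For `p ≤ 1` the integrand is
therefore bounded below by a multiple of `1 / t`. For `p > 1` it is `O(t ^ (-(p + 3) / 4))` at
infinity, and near `t = r`, where `F t ≥ c (t - r)`, it is `O((t - r) ^ (-1 / 2))`.
-/

open Set Asymptotics

section RpowGrowth

variable {f : ℝ → ℝ} {p L c : ℝ}

lemma eventually_mul_rpow_lt_of_tendsto_div_rpow
    (h : Tendsto (fun s => f s / s ^ p) atTop (𝓝 L)) (hc : c < L) :
    ∀ᶠ s in atTop, c * s ^ p < f s := by
  filter_upwards [h.eventually (eventually_gt_nhds hc), eventually_gt_atTop 0] with s hs hs0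
  exact (lt_div_iff₀ (Real.rpow_pos_of_pos hs0 p)).mp hs

lemma eventually_lt_mul_rpow_of_tendsto_div_rpow
    (h : Tendsto (fun s => f s / s ^ p) atTop (𝓝 L)) (hc : L < c) :
    ∀ᶠ s in atTop, f s < c * s ^ p := by
  filter_upwards [h.eventually (eventually_lt_nhds hc), eventually_gt_atTop 0] with s hs hs0
  exact (div_lt_iff₀ (Real.rpow_pos_of_pos hs0 p)).mp hs

end RpowGrowth

lemma image_Ici_of_rightInverse {g ginv : ℝ → ℝ} (hg : StrictMono g)
    (hinv : ∀ t, g (ginv t) = t) (r : ℝ) : g '' Ici (ginv r) = Ici r := by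
  ext t
  constructor
  · rintro ⟨s, hs, rfl⟩
    exact hinv r ▸ hg.monotone hs
  · intro ht
    exact ⟨ginv t, hg.le_iff_le.mp (by rwa [hinv, hinv]), hinv t⟩

lemma integrableOn_comp_iff_of_hasDerivAt_inv_sqrt {a g ginv : ℝ → ℝ} (ha : ∀ t, 0 < a t)
    (hg : ∀ s, HasDerivAt g (1 / √(a (g s))) s) (hinv : ∀ t, g (ginv t) = t) (r : ℝ)
    (φ : ℝ → ℝ) :
    IntegrableOn (fun s => φ (g s)) (Ici (ginv r)) ↔
      IntegrableOn (fun t => √(a t) * φ t) (Ici r) := by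
  have hsqrt : ∀ t, 0 < √(a t) := fun t => Real.sqrt_pos.mpr (ha t)
  have hmono : StrictMono g := strictMono_of_hasDerivAt_pos hg fun s => by simp [hsqrt]
  rw [← image_Ici_of_rightInverse hmono hinv r,
    integrableOn_image_iff_integrableOn_abs_deriv_smul measurableSet_Ici
      (fun s _ => (hg s).hasDerivWithinAt) hmono.injective.injOn]
  refine (integrableOn_congr_fun (fun s _ => ?_) measurableSet_Ici).symm
  rw [smul_eq_mul, abs_of_pos (by simp [hsqrt]), ← mul_assoc, one_div,
    inv_mul_cancel₀ (hsqrt _).ne', one_mul]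

lemma eventually_integral_pos {f : ℝ → ℝ} {r : ℝ} (hf : Continuous f)
    (h0 : ∀ τ, r ≤ τ → 0 ≤ f τ) (hpos : ∀ᶠ τ in atTop, 0 < f τ) :
    ∀ᶠ t in atTop, 0 < ∫ τ in r..t, f τ := by
  obtain ⟨T, hT⟩ := eventually_atTop.mp (hpos.and (eventually_ge_atTop r))
  filter_upwards [eventually_gt_atTop T] with t ht
  have hrT : 0 ≤ ∫ τ in r..T, f τ :=
    intervalIntegral.integral_nonneg (hT T le_rfl).2 fun τ hτ => h0 τ hτ.1
  have hTt : 0 < ∫ τ in T..t, f τ :=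
    intervalIntegral.intervalIntegral_pos_of_pos_on (hf.intervalIntegrable _ _)
      (fun τ hτ => (hT τ hτ.1.le).1) ht
  rw [← intervalIntegral.integral_add_adjacent_intervals (hf.intervalIntegrable r T)
    (hf.intervalIntegrable T t)]
  linarith

lemma eventually_integral_le_sq {f : ℝ → ℝ} {r C : ℝ} (hf : Continuous f)
    (hC : ∀ᶠ τ in atTop, f τ ≤ C * τ) :
    ∃ K, ∀ᶠ t in atTop, ∫ τ in r..t, f τ ≤ K * t ^ 2 := by
  obtain ⟨T, hT⟩ := eventually_atTop.mp (hC.and (eventually_ge_atTop 0))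
  refine ⟨|∫ τ in r..T, f τ| + |C|, ?_⟩
  filter_upwards [eventually_ge_atTop T, eventually_ge_atTop 1] with t hTt ht1
  have hT0 := (hT T le_rfl).2
  have hlin : ∫ τ in T..t, f τ ≤ C * ((t ^ 2 - T ^ 2) / 2) := by
    calc ∫ τ in T..t, f τ ≤ ∫ τ in T..t, C * τ :=
          intervalIntegral.integral_mono_on hTt (hf.intervalIntegrable _ _)
            ((continuous_const_mul C).intervalIntegrable _ _) fun τ hτ => (hT τ hτ.1).1
      _ = C * ((t ^ 2 - T ^ 2) / 2) := by
          rw [intervalIntegral.integral_const_mul, integral_id]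
  rw [← intervalIntegral.integral_add_adjacent_intervals (hf.intervalIntegrable r T)
    (hf.intervalIntegrable T t)]
  have hsq : t ^ 2 - T ^ 2 ≤ t ^ 2 := by nlinarith
  have hsq' : 0 ≤ t ^ 2 - T ^ 2 := by nlinarith
  have hCt : C * ((t ^ 2 - T ^ 2) / 2) ≤ |C| * t ^ 2 := by
    nlinarith [le_abs_self C, abs_nonneg C]
  have hFT : ∫ τ in r..T, f τ ≤ |∫ τ in r..T, f τ| * t ^ 2 :=
    (le_abs_self _).trans (le_mul_of_one_le_right (abs_nonneg _) (by nlinarith))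
  linarith

lemma not_integrableOn_Ici_of_le_sq {a F : ℝ → ℝ} {ν K : ℝ} (hν : 0 < ν)
    (ha : ∀ t, ν ≤ a t) (hF : ∀ᶠ t in atTop, 0 < F t ∧ F t ≤ K * t ^ 2) (r : ℝ) :
    ¬ IntegrableOn (fun t => √(a t) * (1 / √(F t))) (Ici r) := by
  intro hint
  obtain ⟨S, hS⟩ := eventually_atTop.mp (hF.and (eventually_ge_atTop (max r 1)))
  refine not_integrableOn_Ici_inv (a := S) ?_
  refine ((hint.mono_set (Ici_subset_Ici.mpr ?_)).const_mul (√K / √ν)).mono'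
    measurable_inv.aestronglyMeasurable ((ae_restrict_iff' measurableSet_Ici).mpr
      (ae_of_all _ fun t ht => ?_))
  · exact (le_max_left _ _).trans (hS S le_rfl).2
  obtain ⟨⟨hFpos, hFle⟩, ht⟩ := hS t ht
  have ht0 : 0 < t := lt_of_lt_of_le one_pos ((le_max_right _ _).trans ht)
  have hK : 0 < K := by
    by_contra! hK
    nlinarith [mul_nonpos_of_nonpos_of_nonneg hK (sq_nonneg t)]
  have hsqrtF : √(F t) ≤ √K * t := by
    calc √(F t) ≤ √(K * t ^ 2) := Real.sqrt_le_sqrt hFle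
      _ = √K * t := by rw [Real.sqrt_mul hK.le, Real.sqrt_sq ht0.le]
  rw [Real.norm_eq_abs, abs_of_pos (inv_pos.mpr ht0)]
  calc t⁻¹ = √K / √ν * (√ν / (√K * t)) := by field_simp
    _ ≤ √K / √ν * (√(a t) / √(F t)) := by
        gcongr
        exact ha t
    _ = √K / √ν * (√(a t) * (1 / √(F t))) := by rw [mul_one_div]

lemma measurable_sqrt_mul_inv_sqrt_integral {a f : ℝ → ℝ} (ha : Measurable a)
    (hf : Continuous f) (r : ℝ) : Measurable fun t => √(a t) * (1 / √(∫ τ in r..t, f τ)) :=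
  ha.sqrt.mul ((intervalIntegral.continuous_primitive (fun _ _ => hf.intervalIntegrable _ _) r)
    |>.measurable.sqrt.const_div 1)

lemma integrableOn_Ioc_sqrt_mul_inv_sqrt_integral {a f : ℝ → ℝ} {r R c : ℝ}
    (ha : Continuous a) (hf : Continuous f) (hrR : r ≤ R) (hc : 0 < c)
    (hfc : ∀ τ ∈ Icc r R, c ≤ f τ) :
    IntegrableOn (fun t => √(a t) * (1 / √(∫ τ in r..t, f τ))) (Ioc r R) := by
  obtain ⟨A, hA⟩ := (isCompact_Icc (a := r) (b := R)).exists_bound_of_continuousOn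
    ha.continuousOn
  have hsing : IntegrableOn (fun t => √A / √c * (t - r) ^ (-(1 / 2) : ℝ)) (Ioc r R) := by
    have h := (intervalIntegral.intervalIntegrable_rpow' (r := -(1 / 2)) (a := r - r)
      (b := R - r) (by norm_num)).comp_sub_right r
    simp only [sub_add_cancel] at h
    exact (intervalIntegrable_iff_integrableOn_Ioc_of_le hrR).mp (h.const_mul _)
  have hF : ∀ t ∈ Icc r R, c * (t - r) ≤ ∫ τ in r..t, f τ := fun t ht => by
    have h := intervalIntegral.integral_mono_on (μ := volume) ht.1 intervalIntegrable_const
      (hf.intervalIntegrable r t) fun τ hτ => hfc τ ⟨hτ.1, hτ.2.trans ht.2⟩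
    rw [intervalIntegral.integral_const, smul_eq_mul] at h
    linarith
  refine hsing.mono' (measurable_sqrt_mul_inv_sqrt_integral ha.measurable hf r).aestronglyMeasurable
    ((ae_restrict_iff' measurableSet_Ioc).mpr (ae_of_all _ fun t ht => ?_))
  have htr : 0 < t - r := sub_pos.mpr ht.1
  have hsqrtF : √c * √(t - r) ≤ √(∫ τ in r..t, f τ) := by
    rw [← Real.sqrt_mul hc.le]
    exact Real.sqrt_le_sqrt (hF t (Ioc_subset_Icc_self ht))
  have hsqrta : √(a t) ≤ √A :=
    Real.sqrt_le_sqrt ((le_abs_self _).trans (hA t (Ioc_subset_Icc_self ht)))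
  rw [Real.norm_eq_abs, abs_of_nonneg (by positivity), Real.rpow_neg htr.le,
    ← Real.sqrt_eq_rpow, mul_one_div]
  calc √(a t) / √(∫ τ in r..t, f τ) ≤ √A / (√c * √(t - r)) := by gcongr
    _ = √A / √c * (√(t - r))⁻¹ := by rw [div_mul_eq_div_div, div_eq_mul_inv]

lemma eventually_le_rpow_of_tendsto_div_log_rpow {a : ℝ → ℝ} {γ L ε : ℝ}
    (h : Tendsto (fun s => a s / Real.log s ^ γ) atTop (𝓝 L)) (hε : 0 < ε) :
    ∀ᶠ t in atTop, a t ≤ t ^ ε := by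
  have hbigO : a =O[atTop] fun s => Real.log s ^ γ := by
    refine isBigO_of_div_tendsto_nhds ?_ L h
    filter_upwards [Real.tendsto_log_atTop.eventually_gt_atTop 0] with s hs h0
    exact absurd h0 (Real.rpow_pos_of_pos hs γ).ne'
  filter_upwards [(hbigO.trans_isLittleO (isLittleO_log_rpow_rpow_atTop γ hε)).bound one_pos,
    eventually_gt_atTop 0] with t ht ht0
  rw [one_mul, Real.norm_eq_abs, Real.norm_of_nonneg (Real.rpow_nonneg ht0.le ε)] at ht
  exact (le_abs_self _).trans ht

lemma eventually_rpow_le_integral {f : ℝ → ℝ} {r c p : ℝ} (hf : Continuous f) (hc : 0 ≤ c)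
    (hp : -1 < p) (hfc : ∀ τ, r ≤ τ → c * τ ^ p ≤ f τ) :
    ∀ᶠ t in atTop, c / (2 * (p + 1)) * t ^ (p + 1) ≤ ∫ τ in r..t, f τ := by
  have hp1 : 0 < p + 1 := by linarith
  filter_upwards [eventually_ge_atTop r,
    (tendsto_rpow_atTop hp1).eventually_ge_atTop (2 * r ^ (p + 1))] with t hrt ht
  have h := intervalIntegral.integral_mono_on hrt
    ((intervalIntegral.intervalIntegrable_rpow' hp).const_mul c) (hf.intervalIntegrable r t)
    fun τ hτ => hfc τ hτ.1
  rw [intervalIntegral.integral_const_mul, integral_rpow (Or.inl hp)] at h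
  refine le_trans ?_ h
  rw [div_mul_eq_mul_div, mul_div_assoc]
  refine mul_le_mul_of_nonneg_left ?_ hc
  rw [mul_comm, ← div_div, div_right_comm, div_le_div_iff_of_pos_right hp1]
  linarith

lemma sqrt_mul_inv_sqrt_le_rpow {A B k t α β : ℝ} (ht : 0 < t) (hk : 0 < k)
    (hA : A ≤ t ^ α) (hB : k * t ^ β ≤ B) :
    √A * (1 / √B) ≤ 1 / √k * t ^ ((α - β) / 2) := by
  have hsqrt_rpow : ∀ x : ℝ, √(t ^ x) = t ^ (x / 2) := fun x => by
    rw [Real.sqrt_eq_rpow, ← Real.rpow_mul ht.le, mul_one_div]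
  have hA' : √A ≤ t ^ (α / 2) := hsqrt_rpow α ▸ Real.sqrt_le_sqrt hA
  have hB' : √k * t ^ (β / 2) ≤ √B := by
    rw [← hsqrt_rpow, ← Real.sqrt_mul hk.le]
    exact Real.sqrt_le_sqrt hB
  calc √A * (1 / √B) ≤ t ^ (α / 2) * (1 / (√k * t ^ (β / 2))) := by
        gcongr
    _ = 1 / √k * t ^ ((α - β) / 2) := by
        rw [sub_div, Real.rpow_sub ht]
        field_simp

lemma integrableOn_Ici_sqrt_mul_inv_sqrt_integral {a f : ℝ → ℝ} {r c p γ L : ℝ}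
    (ha : Continuous a) (hf : Continuous f) (hp : 1 < p) (hr : 1 ≤ r) (hc : 0 < c)
    (hfc : ∀ τ, r ≤ τ → c * τ ^ p ≤ f τ)
    (haL : Tendsto (fun s => a s / Real.log s ^ γ) atTop (𝓝 L)) :
    IntegrableOn (fun t => √(a t) * (1 / √(∫ τ in r..t, f τ))) (Ici r) := by
  obtain ⟨S, hS⟩ := eventually_atTop.mp
    ((eventually_le_rpow_of_tendsto_div_log_rpow (ε := (p - 1) / 2) haL (by linarith)).and
      ((eventually_rpow_le_integral hf hc.le (by linarith) hfc).and (eventually_ge_atTop r)))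
  have hrS : r ≤ S := (hS S le_rfl).2.2
  have hS0 : 0 < S := by linarith
  rw [integrableOn_Ici_iff_integrableOn_Ioi, ← Ioc_union_Ioi_eq_Ioi hrS]
  refine (integrableOn_Ioc_sqrt_mul_inv_sqrt_integral ha hf hrS hc fun τ hτ => ?_).union ?_
  · exact (le_mul_of_one_le_right hc.le
      (Real.one_le_rpow (hr.trans hτ.1) (by linarith))).trans (hfc τ hτ.1)
  -- the exponent `((p - 1) / 2 - (p + 1)) / 2 = -(p + 3) / 4` is `< -1` exactly when `1 < p`
  refine ((integrableOn_Ioi_rpow_of_lt (a := ((p - 1) / 2 - (p + 1)) / 2) (by linarith)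
    hS0).const_mul (1 / √(c / (2 * (p + 1))))).mono'
    (measurable_sqrt_mul_inv_sqrt_integral ha.measurable hf r).aestronglyMeasurable
    ((ae_restrict_iff' measurableSet_Ioi).mpr (ae_of_all _ fun t ht => ?_))
  obtain ⟨haS, hFS, -⟩ := hS t (le_of_lt ht)
  rw [Real.norm_eq_abs, abs_of_nonneg (by positivity)]
  exact sqrt_mul_inv_sqrt_le_rpow (hS0.trans ht) (by positivity) haS hFS

theorem stmt_9_general (a f g ginv : ℝ → ℝ) (ha : ContDiff ℝ 1 a) (ν : ℝ) (hν : 0 < ν)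
    (hab : ∀ s, ν ≤ a s) (hf : ContDiff ℝ 1 f)
    (hg : ∀ s, HasDerivAt g (1 / Real.sqrt (a (g s))) s)
    (hinv2 : ∀ t, g (ginv t) = t)
    (γ p aInf fInf : ℝ) (hfInf : 0 < fInf)
    (haAsym : Tendsto (fun s => a s / (Real.log s) ^ (2 * γ)) atTop (𝓝 aInf))
    (hfAsym : Tendsto (fun s => f s / s ^ p) atTop (𝓝 fInf)) :
    (∃ r : ℝ, 0 < f r ∧ (∀ s, r < s → 0 ≤ f s) ∧
      IntegrableOn (fun s => 1 / Real.sqrt (∫ τ in r..(g s), f τ))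
        (Set.Ici (ginv r))) ↔ 1 < p := by
  have hcov (r : ℝ) := integrableOn_comp_iff_of_hasDerivAt_inv_sqrt
    (fun t => hν.trans_le (hab t)) hg hinv2 r fun t => 1 / √(∫ τ in r..t, f τ)
  simp only [hcov]
  constructor
  · rintro ⟨r, hfr, hf_nonneg, hint⟩
    by_contra! hp
    have hfpos : ∀ᶠ τ in atTop, 0 < f τ := by
      simpa using eventually_mul_rpow_lt_of_tendsto_div_rpow hfAsym hfInf
    have hflin : ∀ᶠ τ in atTop, f τ ≤ 2 * fInf * τ := by
      filter_upwards [eventually_lt_mul_rpow_of_tendsto_div_rpow hfAsym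
        (by linarith : fInf < 2 * fInf), eventually_ge_atTop 1] with τ hτ hτ1
      calc f τ ≤ 2 * fInf * τ ^ p := hτ.le
        _ ≤ 2 * fInf * τ := by
          gcongr
          exact (Real.rpow_le_rpow_of_exponent_le hτ1 hp).trans_eq (Real.rpow_one τ)
    obtain ⟨K, hK⟩ := eventually_integral_le_sq (r := r) hf.continuous hflin
    have hF_pos := eventually_integral_pos hf.continuous
      (fun τ hτ => hτ.eq_or_lt.elim (fun h => h ▸ hfr.le) (hf_nonneg τ)) hfpos
    exact not_integrableOn_Ici_of_le_sq hν hab (hF_pos.and hK) r hint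
  · intro hp
    obtain ⟨r, hr⟩ := eventually_atTop.mp ((eventually_mul_rpow_lt_of_tendsto_div_rpow hfAsym
      (half_lt_self hfInf)).and (eventually_ge_atTop 1))
    have hfr : ∀ τ, r ≤ τ → 0 < f τ := fun τ hτ => by
      have hτ0 : 0 ≤ τ := zero_le_one.trans (hr τ hτ).2
      exact lt_of_le_of_lt (by positivity) (hr τ hτ).1
    exact ⟨r, hfr r le_rfl, fun s hs => (hfr s hs.le).le,
      integrableOn_Ici_sqrt_mul_inv_sqrt_integral ha.continuous hf.continuous hp (hr r le_rfl).2
        (half_pos hfInf) (fun τ hτ => (hr τ hτ).1.le) haAsym⟩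

theorem stmt_9 (a f g ginv : ℝ → ℝ) (ha : ContDiff ℝ 1 a) (ν : ℝ) (hν : 0 < ν)
    (hab : ∀ s, ν ≤ a s) (hf : ContDiff ℝ 1 f)
    (hg : ∀ s, HasDerivAt g (1 / Real.sqrt (a (g s))) s) (hg0 : g 0 = 0)
    (hinv1 : ∀ s, ginv (g s) = s) (hinv2 : ∀ t, g (ginv t) = t)
    (γ p aInf fInf : ℝ) (hγ : 0 < γ) (hp : 0 < p) (haInf : 0 < aInf) (hfInf : 0 < fInf)
    (haAsym : Tendsto (fun s => a s / (Real.log s) ^ (2 * γ)) atTop (𝓝 aInf))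
    (hfAsym : Tendsto (fun s => f s / s ^ p) atTop (𝓝 fInf)) :
    (∃ r : ℝ, 0 < f r ∧ (∀ s, r < s → 0 ≤ f s) ∧
      IntegrableOn (fun s => 1 / Real.sqrt (∫ τ in r..(g s), f τ))
        (Set.Ici (ginv r))) ↔ 1 < p :=
  stmt_9_general a f g ginv ha ν hν hab hf hg hinv2 γ p aInf fInf hfInf haAsym hfAsym
end

section
/- If v ∈ C²(Ω) solves Δv = h(v) in Ω with h(s) = f(g(s))/√(a(g(s))), then u = g ∘ v ∈ C²(Ω) solves div(a(u)Du) = (a'(u)/2)|Du|² + f(u) in Ω; conversely if u ∈ C²(Ω) solves the quasi-linear equation, then v = g⁻¹ ∘ u solves Δv = h(v). Moreover v(x) → +∞ as d(x,∂Ω) → 0 if and only if u(x) → +∞ as d(x,∂Ω) → 0. -/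
open Filter Topology

/-! Since `g' = 1 / √(a ∘ g)`, the flux of `u = g ∘ v` is `a(u) ∂ᵢu = √(a(g(v))) ∂ᵢv`, and
`s ↦ √(a(g(s)))` has derivative `a'(g(s)) / (2 a(g(s)))`. Differentiating the flux once more gives the
pointwise identity `div(a(u) Du) - a'(u)/2 |Du|² = √(a(u)) Δv`, from which both directions follow
(`g⁻¹` is `C²` with derivative `√a`). Boundary blow-up transfers because `g` is an increasing
bijection of `ℝ`. -/

section ChangeOfVariables

variable {E : Type*} [NormedAddCommGroup E] [NormedSpace ℝ E]

theorem fderiv_comp_apply_of_hasDerivAt {φ : ℝ → ℝ} {φ' : ℝ} {v : E → ℝ} {x : E}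
    (hφ : HasDerivAt φ φ' (v x)) (hv : DifferentiableAt ℝ v x) (e : E) :
    fderiv ℝ (φ ∘ v) x e = φ' * fderiv ℝ v x e := by
  simp [(hφ.comp_hasFDerivAt x hv.hasFDerivAt).fderiv]

theorem fderiv_mul_fderiv_apply {φ : ℝ → ℝ} {v : E → ℝ} {x : E}
    (hφ : DifferentiableAt ℝ φ (v x)) (hv : ContDiffAt ℝ 2 v x) (e : E) :
    fderiv ℝ (fun y => φ (v y) * fderiv ℝ v y e) x e =
      deriv φ (v x) * fderiv ℝ v x e ^ 2 + φ (v x) * fderiv ℝ (fun y => fderiv ℝ v y e) x e := by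
  have hv₁ : DifferentiableAt ℝ v x := hv.differentiableAt (by norm_num)
  have hDv : DifferentiableAt ℝ (fun y => fderiv ℝ v y e) x :=
    ((hv.fderiv_right (m := 1) (by norm_num)).differentiableAt one_ne_zero).clm_apply
      (differentiableAt_const e)
  rw [fderiv_fun_mul (c := fun y => φ (v y)) (hφ.comp x hv₁) hDv]
  simp [← Function.comp_def, fderiv_comp_apply_of_hasDerivAt hφ.hasDerivAt hv₁]
  ring

variable {a g : ℝ → ℝ}

theorem hasDerivAt_sqrt_comp (ha : Differentiable ℝ a) (hpos : ∀ t, 0 < a t)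
    (hg : ∀ s, HasDerivAt g (1 / √(a (g s))) s) (s : ℝ) :
    HasDerivAt (fun s => √(a (g s))) (deriv a (g s) / (2 * a (g s))) s := by
  have hA := hpos (g s)
  refine (((Real.hasDerivAt_sqrt hA.ne').comp (g s) (ha (g s)).hasDerivAt).comp s
    (hg s)).congr_deriv ?_
  have hr := Real.sq_sqrt hA.le
  field_simp
  linear_combination -deriv a (g s) * hr

theorem mul_fderiv_comp_apply_eq_sqrt_mul (hg : ∀ s, HasDerivAt g (1 / √(a (g s))) s)
    {v : E → ℝ} {y : E} (hv : DifferentiableAt ℝ v y) (e : E) :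
    a ((g ∘ v) y) * fderiv ℝ (g ∘ v) y e = √(a (g (v y))) * fderiv ℝ v y e := by
  rw [fderiv_comp_apply_of_hasDerivAt (hg _) hv, ← mul_assoc, mul_one_div, Function.comp_apply,
    Real.div_sqrt]

theorem fderiv_flux_comp_sub (ha : ContDiff ℝ 1 a) (hpos : ∀ t, 0 < a t)
    (hg : ∀ s, HasDerivAt g (1 / √(a (g s))) s) {v : E → ℝ} {x : E} (hv : ContDiffAt ℝ 2 v x)
    (e : E) :
    fderiv ℝ (fun y => a ((g ∘ v) y) * fderiv ℝ (g ∘ v) y e) x e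
        - deriv a ((g ∘ v) x) / 2 * fderiv ℝ (g ∘ v) x e ^ 2
      = √(a ((g ∘ v) x)) * fderiv ℝ (fun y => fderiv ℝ v y e) x e := by
  have ha₁ : Differentiable ℝ a := ha.differentiable one_ne_zero
  have hv₁ : DifferentiableAt ℝ v x := hv.differentiableAt (by norm_num)
  have hflux : (fun y => a ((g ∘ v) y) * fderiv ℝ (g ∘ v) y e)
      =ᶠ[𝓝 x] fun y => √(a (g (v y))) * fderiv ℝ v y e :=
    (hv.eventually (by simp)).mono fun y hy =>
      mul_fderiv_comp_apply_eq_sqrt_mul hg (hy.differentiableAt (by norm_num)) e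
  have hA := hpos (g (v x))
  rw [hflux.fderiv_eq,
    fderiv_mul_fderiv_apply (hasDerivAt_sqrt_comp ha₁ hpos hg (v x)).differentiableAt hv,
    (hasDerivAt_sqrt_comp ha₁ hpos hg (v x)).deriv, fderiv_comp_apply_of_hasDerivAt (hg _) hv₁,
    Function.comp_apply]
  have hr := Real.sq_sqrt hA.le
  field_simp
  linear_combination (deriv a (g (v x)) * fderiv ℝ v x e ^ 2) * hr

theorem sum_fderiv_flux_comp_sub {ι : Type*} [Fintype ι] (ha : ContDiff ℝ 1 a)
    (hpos : ∀ t, 0 < a t) (hg : ∀ s, HasDerivAt g (1 / √(a (g s))) s) {v : E → ℝ} {x : E}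
    (hv : ContDiffAt ℝ 2 v x) (e : ι → E) :
    ∑ i, fderiv ℝ (fun y => a ((g ∘ v) y) * fderiv ℝ (g ∘ v) y (e i)) x (e i)
        - deriv a ((g ∘ v) x) / 2 * ∑ i, fderiv ℝ (g ∘ v) x (e i) ^ 2
      = √(a ((g ∘ v) x)) * ∑ i, fderiv ℝ (fun y => fderiv ℝ v y (e i)) x (e i) := by
  simp only [Finset.mul_sum, ← Finset.sum_sub_distrib, fderiv_flux_comp_sub ha hpos hg hv]

end ChangeOfVariables

theorem hasDerivAt_of_rightInverse {g ginv ψ : ℝ → ℝ} (hg : ∀ s, HasDerivAt g (1 / ψ (g s)) s)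
    (hψ : ∀ t, ψ t ≠ 0) (hcont : Continuous ginv) (hinv : ∀ t, g (ginv t) = t) (t : ℝ) :
    HasDerivAt ginv (ψ t) t := by
  have hgt := hg (ginv t)
  rw [hinv] at hgt
  simpa using hgt.of_local_left_inverse hcont.continuousAt (by simpa using hψ t)
    (.of_forall hinv)

theorem contDiff_two_of_rightInverse {a g ginv : ℝ → ℝ} (ha : ContDiff ℝ 1 a)
    (hpos : ∀ t, 0 < a t) (hg : ∀ s, HasDerivAt g (1 / √(a (g s))) s) (hcont : Continuous ginv)
    (hinv : ∀ t, g (ginv t) = t) : ContDiff ℝ 2 ginv := by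
  have hder : ∀ t, HasDerivAt ginv (√(a t)) t :=
    hasDerivAt_of_rightInverse hg (fun t => (Real.sqrt_pos.2 (hpos t)).ne') hcont hinv
  rw [show (2 : WithTop ℕ∞) = 1 + 1 from rfl, contDiff_succ_iff_deriv]
  refine ⟨fun t => (hder t).differentiableAt, by simp, ?_⟩
  rw [funext fun t => (hder t).deriv]
  exact contDiff_iff_contDiffAt.2 fun t =>
    (Real.contDiffAt_sqrt (hpos t).ne').comp t ha.contDiffAt

def BlowsUpAtBoundary {X : Type*} [PseudoMetricSpace X] (Ω : Set X) (w : X → ℝ) : Prop :=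
  ∀ M : ℝ, ∃ δ > (0 : ℝ), ∀ x ∈ Ω, Metric.infDist x (frontier Ω) < δ → M ≤ w x

theorem blowsUpAtBoundary_comp_iff {X : Type*} [PseudoMetricSpace X] {Ω : Set X} {w : X → ℝ}
    {g : ℝ → ℝ} (hmono : StrictMono g) (hsurj : Function.Surjective g) :
    BlowsUpAtBoundary Ω (g ∘ w) ↔ BlowsUpAtBoundary Ω w := by
  refine ⟨fun H M => ?_, fun H M => ?_⟩
  · obtain ⟨δ, hδ, hw⟩ := H (g M)
    exact ⟨δ, hδ, fun x hx hxδ => hmono.le_iff_le.1 (hw x hx hxδ)⟩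
  · obtain ⟨M', rfl⟩ := hsurj M
    obtain ⟨δ, hδ, hw⟩ := H M'
    exact ⟨δ, hδ, fun x hx hxδ => hmono.monotone (hw x hx hxδ)⟩

theorem stmt_11_general {N : ℕ} (Ω : Set (EuclideanSpace ℝ (Fin N))) (hΩ : IsOpen Ω)
    (a f g ginv : ℝ → ℝ) (ha : ContDiff ℝ 1 a) (ν : ℝ) (hν : 0 < ν)
    (hab : ∀ s, ν ≤ a s)
    (hg : ∀ s, HasDerivAt g (1 / Real.sqrt (a (g s))) s)
    (hgC2 : ContDiff ℝ 2 g) (hmono : StrictMono g)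
    (hinv1 : ∀ s, ginv (g s) = s) (hinv2 : ∀ t, g (ginv t) = t)
    (pd : (EuclideanSpace ℝ (Fin N) → ℝ) → Fin N → EuclideanSpace ℝ (Fin N) → ℝ)
    (hpd : ∀ w i x, pd w i x = fderiv ℝ w x (EuclideanSpace.single i 1))
    (h : ℝ → ℝ) (hh : ∀ s, h s = f (g s) / Real.sqrt (a (g s))) :
    -- (i) v solves the semi-linear equation ⟹ u = g ∘ v solves the quasi-linear one
    (∀ v : EuclideanSpace ℝ (Fin N) → ℝ, ContDiffOn ℝ 2 v Ω →
      (∀ x ∈ Ω, (∑ i, pd (pd v i) i x) = h (v x)) →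
      ContDiffOn ℝ 2 (g ∘ v) Ω ∧
      ∀ x ∈ Ω, (∑ i, pd (fun y => a ((g ∘ v) y) * pd (g ∘ v) i y) i x) =
        deriv a ((g ∘ v) x) / 2 * (∑ i, (pd (g ∘ v) i x) ^ 2) + f ((g ∘ v) x)) ∧
    -- (ii) u solves the quasi-linear equation ⟹ v = g⁻¹ ∘ u solves the semi-linear one
    (∀ u : EuclideanSpace ℝ (Fin N) → ℝ, ContDiffOn ℝ 2 u Ω →
      (∀ x ∈ Ω, (∑ i, pd (fun y => a (u y) * pd u i y) i x) =
        deriv a (u x) / 2 * (∑ i, (pd u i x) ^ 2) + f (u x)) →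
      ContDiffOn ℝ 2 (ginv ∘ u) Ω ∧
      ∀ x ∈ Ω, (∑ i, pd (pd (ginv ∘ u) i) i x) = h ((ginv ∘ u) x)) ∧
    -- (iii) boundary blow-up of v is equivalent to boundary blow-up of u = g ∘ v
    (∀ v : EuclideanSpace ℝ (Fin N) → ℝ,
      ((∀ M : ℝ, ∃ δ > (0:ℝ), ∀ x ∈ Ω, Metric.infDist x (frontier Ω) < δ → M ≤ v x) ↔
       (∀ M : ℝ, ∃ δ > (0:ℝ), ∀ x ∈ Ω,
          Metric.infDist x (frontier Ω) < δ → M ≤ g (v x)))) := by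
  have hpos : ∀ t, 0 < a t := fun t => hν.trans_le (hab t)
  have hsqrt : ∀ t, √(a t) ≠ 0 := fun t => (Real.sqrt_pos.2 (hpos t)).ne'
  have key := fun {v} (hv : ContDiffOn ℝ 2 v Ω) {x} (hx : x ∈ Ω) =>
    sum_fderiv_flux_comp_sub ha hpos hg (hv.contDiffAt (hΩ.mem_nhds hx))
      fun i : Fin N => EuclideanSpace.single i 1
  have hpd_fun : ∀ w i, pd w i = fun x => fderiv ℝ w x (EuclideanSpace.single i 1) :=
    fun w i => funext (hpd w i)
  simp only [hpd_fun]
  refine ⟨fun v hv hsemi => ⟨hgC2.comp_contDiffOn hv, fun x hx => ?_⟩,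
    fun u hu hquasi => ?_,
    fun v => (blowsUpAtBoundary_comp_iff hmono fun t => ⟨ginv t, hinv2 t⟩).symm⟩
  · have hdiv := key hv hx
    rw [hsemi x hx, hh] at hdiv
    simp only [Function.comp_apply] at hdiv ⊢
    rw [mul_div_cancel₀ _ (hsqrt _)] at hdiv
    linarith
  · have hcont : Continuous ginv :=
      Monotone.continuous_of_surjective (fun s t hst => hmono.le_iff_le.1 (by rwa [hinv2, hinv2]))
        fun s => ⟨g s, hinv1 s⟩
    have hv : ContDiffOn ℝ 2 (ginv ∘ u) Ω :=
      (contDiff_two_of_rightInverse ha hpos hg hcont hinv2).comp_contDiffOn hu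
    refine ⟨hv, fun x hx => ?_⟩
    have hdiv := key hv hx
    rw [show g ∘ (ginv ∘ u) = u from funext fun y => hinv2 (u y), hquasi x hx,
      add_sub_cancel_left] at hdiv
    rw [hh, Function.comp_apply, hinv2, eq_div_iff (hsqrt _), hdiv, mul_comm]

theorem stmt_11 {N : ℕ} (Ω : Set (EuclideanSpace ℝ (Fin N))) (hΩ : IsOpen Ω)
    (a f g ginv : ℝ → ℝ) (ha : ContDiff ℝ 1 a) (ν : ℝ) (hν : 0 < ν)
    (hab : ∀ s, ν ≤ a s) (hf : ContDiff ℝ 1 f)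
    (hg : ∀ s, HasDerivAt g (1 / Real.sqrt (a (g s))) s) (hg0 : g 0 = 0)
    (hgC2 : ContDiff ℝ 2 g) (hmono : StrictMono g)
    (hinv1 : ∀ s, ginv (g s) = s) (hinv2 : ∀ t, g (ginv t) = t)
    (pd : (EuclideanSpace ℝ (Fin N) → ℝ) → Fin N → EuclideanSpace ℝ (Fin N) → ℝ)
    (hpd : ∀ w i x, pd w i x = fderiv ℝ w x (EuclideanSpace.single i 1))
    (h : ℝ → ℝ) (hh : ∀ s, h s = f (g s) / Real.sqrt (a (g s))) :
    -- (i) v solves the semi-linear equation ⟹ u = g ∘ v solves the quasi-linear one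
    (∀ v : EuclideanSpace ℝ (Fin N) → ℝ, ContDiffOn ℝ 2 v Ω →
      (∀ x ∈ Ω, (∑ i, pd (pd v i) i x) = h (v x)) →
      ContDiffOn ℝ 2 (g ∘ v) Ω ∧
      ∀ x ∈ Ω, (∑ i, pd (fun y => a ((g ∘ v) y) * pd (g ∘ v) i y) i x) =
        deriv a ((g ∘ v) x) / 2 * (∑ i, (pd (g ∘ v) i x) ^ 2) + f ((g ∘ v) x)) ∧
    -- (ii) u solves the quasi-linear equation ⟹ v = g⁻¹ ∘ u solves the semi-linear one
    (∀ u : EuclideanSpace ℝ (Fin N) → ℝ, ContDiffOn ℝ 2 u Ω →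
      (∀ x ∈ Ω, (∑ i, pd (fun y => a (u y) * pd u i y) i x) =
        deriv a (u x) / 2 * (∑ i, (pd u i x) ^ 2) + f (u x)) →
      ContDiffOn ℝ 2 (ginv ∘ u) Ω ∧
      ∀ x ∈ Ω, (∑ i, pd (pd (ginv ∘ u) i) i x) = h ((ginv ∘ u) x)) ∧
    -- (iii) boundary blow-up of v is equivalent to boundary blow-up of u = g ∘ v
    (∀ v : EuclideanSpace ℝ (Fin N) → ℝ,
      ((∀ M : ℝ, ∃ δ > (0:ℝ), ∀ x ∈ Ω, Metric.infDist x (frontier Ω) < δ → M ≤ v x) ↔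
       (∀ M : ℝ, ∃ δ > (0:ℝ), ∀ x ∈ Ω,
          Metric.infDist x (frontier Ω) < δ → M ≤ g (v x)))) :=
  stmt_11_general Ω hΩ a f g ginv ha ν hν hab hg hgC2 hmono hinv1 hinv2 pd hpd h hh
end

section
/- Let f(s) = s^p for s ≥ 0, f(s) = 0 for s < 0, and a(s) = 1 + |s|^k, with p > k + 1 > 1. Then lim_{s→+∞} [2f'(s)a(s) − f(s)a'(s)] g⁻¹(s) / (2 a(s)^{3/2} f(s)) = (2p − k)/(k + 2) > 1, where g solves g' = 1/√(a∘g), g(0) = 0. -/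
open Filter Topology Set

/-!
Differentiating `s ↦ ∫₀^{g s} √a - s` shows that `g⁻¹(t) = ∫₀ᵗ √(1 + |u|ᵏ) du`. Squeezing the
integrand between `u^{k/2}` and `1 + u^{k/2}` gives `g⁻¹(t) ~ (2/(k+2)) t^{(k+2)/2}`, while for
`s > 0` the remaining factor of the quotient is `s^{(k+2)/2}` times a continuous function of
`s^{-k} → 0` whose value at `0` is `(2p - k)/2`.
-/

theorem integral_comp_eq_of_hasDerivAt_one_div {φ g : ℝ → ℝ} (hφ : Continuous φ)
    (hφ0 : ∀ x, φ x ≠ 0) (hg : ∀ s, HasDerivAt g (1 / φ (g s)) s) (hg0 : g 0 = 0) (s : ℝ) :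
    ∫ u in (0:ℝ)..g s, φ u = s := by
  have hderiv : ∀ s, HasDerivAt (fun s => (∫ u in (0:ℝ)..g s, φ u) - s) 0 s := fun s => by
    have h := ((hφ.integral_hasStrictDerivAt 0 (g s)).hasDerivAt.comp s (hg s)).sub
      (hasDerivAt_id s)
    rwa [mul_one_div_cancel (hφ0 (g s)), sub_self] at h
  have hconst := is_const_of_deriv_eq_zero (fun x => (hderiv x).differentiableAt)
    (fun x => (hderiv x).deriv) s 0
  simp only [hg0, intervalIntegral.integral_same, sub_zero] at hconst
  linarith

theorem continuous_sqrt_one_add_abs_rpow {k : ℝ} (hk : 0 ≤ k) :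
    Continuous fun u : ℝ => √(1 + |u| ^ k) :=
  (continuous_const.add (continuous_abs.rpow_const fun _ => Or.inr hk)).sqrt

theorem rpow_half_le_sqrt_one_add_rpow {u : ℝ} (hu : 0 ≤ u) (k : ℝ) :
    u ^ (k / 2) ≤ √(1 + u ^ k) := by
  rw [← Real.sqrt_sq (Real.rpow_nonneg hu _), ← Real.rpow_natCast, ← Real.rpow_mul hu]
  refine Real.sqrt_le_sqrt ?_
  norm_num

theorem sqrt_one_add_rpow_le_one_add_rpow_half {u : ℝ} (hu : 0 ≤ u) (k : ℝ) :
    √(1 + u ^ k) ≤ 1 + u ^ (k / 2) := by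
  have hpos := Real.rpow_nonneg hu (k / 2)
  have hsq : (u ^ (k / 2)) ^ 2 = u ^ k := by
    rw [← Real.rpow_natCast, ← Real.rpow_mul hu]
    norm_num
  rw [Real.sqrt_le_left (by positivity)]
  nlinarith

theorem integral_rpow_half {k : ℝ} (hk : 0 ≤ k) (t : ℝ) :
    ∫ u in (0:ℝ)..t, u ^ (k / 2) = 2 / (k + 2) * t ^ ((k + 2) / 2) := by
  rw [integral_rpow (Or.inl (by linarith)), Real.zero_rpow (by positivity),
    show k / 2 + 1 = (k + 2) / 2 by ring]
  field_simp
  ring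

theorem le_integral_sqrt_one_add_abs_rpow {k t : ℝ} (hk : 0 ≤ k) (ht : 0 ≤ t) :
    2 / (k + 2) * t ^ ((k + 2) / 2) ≤ ∫ u in (0:ℝ)..t, √(1 + |u| ^ k) := by
  rw [← integral_rpow_half hk]
  refine intervalIntegral.integral_mono_on ht
    ((continuous_id.rpow_const fun _ => Or.inr (by positivity)).intervalIntegrable _ _)
    ((continuous_sqrt_one_add_abs_rpow hk).intervalIntegrable _ _) fun u hu => ?_
  rw [abs_of_nonneg hu.1]
  exact rpow_half_le_sqrt_one_add_rpow hu.1 k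

theorem integral_sqrt_one_add_abs_rpow_le {k t : ℝ} (hk : 0 ≤ k) (ht : 0 ≤ t) :
    ∫ u in (0:ℝ)..t, √(1 + |u| ^ k) ≤ t + 2 / (k + 2) * t ^ ((k + 2) / 2) := by
  have hint : IntervalIntegrable (fun u : ℝ => u ^ (k / 2)) MeasureTheory.volume 0 t :=
    (continuous_id.rpow_const fun _ => Or.inr (by positivity)).intervalIntegrable _ _
  have hrhs : ∫ u in (0:ℝ)..t, (1 + u ^ (k / 2)) = t + 2 / (k + 2) * t ^ ((k + 2) / 2) := by
    simp [intervalIntegral.integral_add intervalIntegrable_const hint, integral_rpow_half hk]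
  rw [← hrhs]
  refine intervalIntegral.integral_mono_on ht
    ((continuous_sqrt_one_add_abs_rpow hk).intervalIntegrable _ _)
    (intervalIntegrable_const.add hint) fun u hu => ?_
  rw [abs_of_nonneg hu.1]
  exact sqrt_one_add_rpow_le_one_add_rpow_half hu.1 k

theorem tendsto_integral_sqrt_one_add_abs_rpow_div_rpow {k : ℝ} (hk : 0 < k) :
    Tendsto (fun t => (∫ u in (0:ℝ)..t, √(1 + |u| ^ k)) / t ^ ((k + 2) / 2)) atTop
      (𝓝 (2 / (k + 2))) := by
  have hupper : Tendsto (fun t : ℝ => 2 / (k + 2) + t ^ (-(k / 2))) atTop (𝓝 (2 / (k + 2))) := by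
    simpa using tendsto_const_nhds.add (tendsto_rpow_neg_atTop (half_pos hk))
  refine tendsto_of_tendsto_of_tendsto_of_le_of_le' tendsto_const_nhds hupper ?_ ?_ <;>
    filter_upwards [eventually_gt_atTop 0] with t ht <;>
    have hpow : 0 < t ^ ((k + 2) / 2) := Real.rpow_pos_of_pos ht _
  · rw [le_div_iff₀ hpow]
    exact le_integral_sqrt_one_add_abs_rpow hk.le ht.le
  · have hmul : t ^ (-(k / 2)) * t ^ ((k + 2) / 2) = t := by
      rw [← Real.rpow_add ht, show -(k / 2) + (k + 2) / 2 = 1 by ring, Real.rpow_one]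
    rw [div_le_iff₀ hpow, add_mul, hmul, add_comm]
    exact integral_sqrt_one_add_abs_rpow_le hk.le ht.le

theorem quotient_eq_div_rpow_mul {x : ℝ} (hx : 0 < x) (p k G : ℝ) :
    (2 * (p * x ^ (p - 1)) * (1 + x ^ k) - x ^ p * (k * x ^ (k - 1))) * G /
      (2 * (1 + x ^ k) ^ ((3:ℝ) / 2) * x ^ p)
    = G / x ^ ((k + 2) / 2) *
      ((2 * p * x ^ (-k) + (2 * p - k)) / (2 * (x ^ (-k) + 1) ^ ((3:ℝ) / 2))) := by
  have hv : 0 < x ^ k := Real.rpow_pos_of_pos hx k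
  have e1 : x ^ p = x ^ (p - 1) * x := by
    rw [← Real.rpow_add_one hx.ne']; ring_nf
  have e2 : x ^ (k - 1) = x ^ k / x := by
    rw [eq_div_iff hx.ne', ← Real.rpow_add_one hx.ne']; ring_nf
  have e3 : (x ^ (-k) + 1) ^ ((3:ℝ) / 2) = (1 + x ^ k) ^ ((3:ℝ) / 2) / (x ^ k) ^ ((3:ℝ) / 2) := by
    rw [Real.rpow_neg hx.le, ← Real.div_rpow (by positivity) hv.le]
    congr 1
    field_simp
  have e4 : x ^ ((k + 2) / 2) = (x ^ k) ^ ((3:ℝ) / 2) * x / x ^ k := by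
    rw [eq_div_iff hv.ne', ← Real.rpow_mul hx.le, ← Real.rpow_add hx,
      show (k + 2) / 2 + k = k * (3 / 2) + 1 by ring, Real.rpow_add hx, Real.rpow_one]
  have hA : 0 < (1 + x ^ k) ^ ((3:ℝ) / 2) := Real.rpow_pos_of_pos (by positivity) _
  have hB : 0 < (x ^ k) ^ ((3:ℝ) / 2) := Real.rpow_pos_of_pos hv _
  have hu : 0 < x ^ (p - 1) := Real.rpow_pos_of_pos hx _
  rw [e3, e4, e1, e2, Real.rpow_neg hx.le]
  field_simp
  ring

theorem tendsto_quotient_factor {k : ℝ} (hk : 0 < k) (p : ℝ) :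
    Tendsto (fun x : ℝ => (2 * p * x ^ (-k) + (2 * p - k)) / (2 * (x ^ (-k) + 1) ^ ((3:ℝ) / 2)))
      atTop (𝓝 ((2 * p - k) / 2)) := by
  have hcont : ContinuousAt
      (fun y : ℝ => (2 * p * y + (2 * p - k)) / (2 * (y + 1) ^ ((3:ℝ) / 2))) 0 := by
    refine ContinuousAt.div (by fun_prop) ?_ (by norm_num)
    exact continuousAt_const.mul ((continuousAt_id.add continuousAt_const).rpow_const
      (Or.inr (by norm_num)))
  simpa [Function.comp_def] using hcont.tendsto.comp (tendsto_rpow_neg_atTop hk)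

theorem stmt_14_general (a f g ginv : ℝ → ℝ) (k p : ℝ) (hk : 0 < k) (hp : k + 1 < p)
    (hfdef : ∀ s : ℝ, f s = if 0 ≤ s then s ^ p else 0)
    (hadef : ∀ s : ℝ, a s = 1 + |s| ^ k)
    (hg : ∀ s, HasDerivAt g (1 / Real.sqrt (a (g s))) s) (hg0 : g 0 = 0)
    (hinv2 : ∀ t, g (ginv t) = t) :
    Tendsto (fun s => (2 * deriv f s * a s - f s * deriv a s) * ginv s /
        (2 * (a s) ^ ((3:ℝ)/2) * f s)) atTop
      (𝓝 ((2 * p - k) / (k + 2))) ∧ 1 < (2 * p - k) / (k + 2) := by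
  have hginv (t : ℝ) : ginv t = ∫ u in (0:ℝ)..t, √(1 + |u| ^ k) := by
    conv_rhs => rw [← hinv2 t]
    refine (integral_comp_eq_of_hasDerivAt_one_div (continuous_sqrt_one_add_abs_rpow hk.le)
      (fun x => (Real.sqrt_pos.2 (by positivity)).ne') (fun s => ?_) hg0 _).symm
    simpa only [hadef] using hg s
  have hf : EqOn f (· ^ p) (Ioi 0) := fun s (hs : 0 < s) => by simp [hfdef, hs.le]
  have ha : EqOn a (fun s => 1 + s ^ k) (Ioi 0) := fun s hs => by
    simp [hadef, abs_of_pos (mem_Ioi.1 hs)]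
  refine ⟨?_, by rw [lt_div_iff₀ (by linarith)]; linarith⟩
  have hlim := (tendsto_integral_sqrt_one_add_abs_rpow_div_rpow hk).mul
    (tendsto_quotient_factor hk p)
  rw [show 2 / (k + 2) * ((2 * p - k) / 2) = (2 * p - k) / (k + 2) by field_simp] at hlim
  refine hlim.congr' ?_
  filter_upwards [eventually_gt_atTop 0] with s hs
  rw [hf.deriv isOpen_Ioi hs, ha.deriv isOpen_Ioi hs, hf hs, ha hs, hginv, Real.deriv_rpow_const,
    deriv_const_add, Real.deriv_rpow_const, quotient_eq_div_rpow_mul hs]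

theorem stmt_14 (a f g ginv : ℝ → ℝ) (k p : ℝ) (hk : 0 < k) (hp : k + 1 < p)
    (hfdef : ∀ s : ℝ, f s = if 0 ≤ s then s ^ p else 0)
    (hadef : ∀ s : ℝ, a s = 1 + |s| ^ k)
    (hg : ∀ s, HasDerivAt g (1 / Real.sqrt (a (g s))) s) (hg0 : g 0 = 0)
    (hinv1 : ∀ s, ginv (g s) = s) (hinv2 : ∀ t, g (ginv t) = t) :
    Tendsto (fun s => (2 * deriv f s * a s - f s * deriv a s) * ginv s /
        (2 * (a s) ^ ((3:ℝ)/2) * f s)) atTop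
      (𝓝 ((2 * p - k) / (k + 2))) ∧ 1 < (2 * p - k) / (k + 2) :=
  stmt_14_general a f g ginv k p hk hp hfdef hadef hg hg0 hinv2
end

section
/- Assume a(s)/s^k → a_∞ and f(s)/s^p → f_∞ as s → +∞ with k, a_∞, f_∞ > 0 and p > k+1, f ≥ 0 vanishing on (-∞,0] and positive on (0,∞). Let F(t) = ∫_0^t f, g solve g' = 1/√(a∘g), g(0)=0, and define B(w) = f(g(w)) g'(w)/√(2F(g(w))) and Λ(w) = [∫_0^w √(2F(g(s))) ds]/F(g(w)). Then lim_{w→+∞} B(w)Λ(w) = 2(p+1)/(p+k+3), and lim_{w→+∞} Λ(w) = 0. -/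
/-!
Everything reduces to power laws `u w ∼ c w ^ r` as `w → +∞`. These survive products,
quotients, roots and composition, and pass to antiderivatives when `r > -1`
(`∫₀ʷ h ∼ c w ^ (r + 1) / (r + 1)`, by fencing the error term between multiples of
`w ^ (r + 1)`). The ODE gives `(g ^ ((k + 2) / 2))' = ((k + 2) / 2) / √(a(g) / g ^ k) →
(k + 2) / (2 √a∞)`, hence `g ∼ g∞ w ^ γ` with `γ = 2 / (k + 2)`. Then `F ∘ g ∼ C w ^ α` with
`α = (p + 1) γ > 2` and the integral in `Λ` grows like `w ^ (α / 2 + 1)`, so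
`Λ ∼ const · w ^ (1 - α / 2) → 0`, while in `B Λ` all exponents cancel and only the constant
`2 (p + 1) / (p + k + 3)` survives.
-/

open Filter Topology Asymptotics

lemma isLittleO_rpow_add_one_of_hasDerivAt {G G' : ℝ → ℝ} {r w₀ : ℝ} (hr : -1 < r)
    (hG : ∀ w ≥ w₀, HasDerivAt G (G' w) w) (hG' : G' =o[atTop] (· ^ r)) :
    G =o[atTop] (· ^ (r + 1)) := by
  have hr1 : 0 < r + 1 := by linarith
  rw [isLittleO_iff]
  intro ε hε
  obtain ⟨S, hS⟩ := eventually_atTop.1 <|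
    (isLittleO_iff.1 hG' (by positivity : 0 < ε / 2 * (r + 1))).and
      (eventually_ge_atTop (max w₀ 1))
  have hS_pos : 0 < S := lt_of_lt_of_le one_pos ((le_max_right _ _).trans (hS S le_rfl).2)
  have hS_w₀ : ∀ x ≥ S, w₀ ≤ x := fun x hx => (le_max_left _ _).trans (hS x hx).2
  have hfence : ∀ w ≥ S, ‖G w - G S‖ ≤ ε / 2 * (w ^ (r + 1) - S ^ (r + 1)) := by
    intro w hw
    have hx_pos : ∀ x ∈ Set.Icc S w, 0 < x := fun x hx => hS_pos.trans_le hx.1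
    have hB : ∀ x ∈ Set.Icc S w,
        HasDerivAt (fun x => ε / 2 * (x ^ (r + 1) - S ^ (r + 1))) (ε / 2 * ((r + 1) * x ^ r)) x :=
      fun x hx => by
        simpa using ((Real.hasDerivAt_rpow_const (p := r + 1)
          (Or.inl (hx_pos x hx).ne')).sub_const (S ^ (r + 1))).const_mul (ε / 2)
    refine image_norm_le_of_norm_deriv_right_le_deriv_boundary' (f := fun x => G x - G S)
      (f' := G') (fun x hx => ((hG x (hS_w₀ x hx.1)).sub_const _).continuousAt.continuousWithinAt)
      (fun x hx => ((hG x (hS_w₀ x hx.1)).sub_const _).hasDerivWithinAt) (by simp)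
      (fun x hx => (hB x hx).continuousAt.continuousWithinAt)
      (fun x hx => (hB x (Set.Ico_subset_Icc_self hx)).hasDerivWithinAt) ?_ ⟨hw, le_rfl⟩
    intro x hx
    have := (hS x hx.1).1
    rwa [Real.norm_of_nonneg (Real.rpow_nonneg (hx_pos x (Set.Ico_subset_Icc_self hx)).le r),
      mul_assoc] at this
  have hlarge : ∀ᶠ w in atTop, ‖G S‖ ≤ ε / 2 * w ^ (r + 1) :=
    ((tendsto_rpow_atTop hr1).eventually_ge_atTop (‖G S‖ / (ε / 2))).mono fun w hw =>
      (div_le_iff₀' (by positivity)).1 hw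
  filter_upwards [eventually_ge_atTop S, hlarge] with w hw hGS
  have hSr : 0 ≤ S ^ (r + 1) := Real.rpow_nonneg hS_pos.le _
  rw [Real.norm_of_nonneg (Real.rpow_nonneg (hS_pos.le.trans hw) _)]
  calc ‖G w‖ ≤ ‖G w - G S‖ + ‖G S‖ := norm_le_norm_sub_add _ _
    _ ≤ ε / 2 * (w ^ (r + 1) - S ^ (r + 1)) + ε / 2 * w ^ (r + 1) :=
      add_le_add (hfence w hw) hGS
    _ ≤ ε * w ^ (r + 1) := by nlinarith

lemma tendsto_atTop_of_hasDerivAt_comp_s19 {g ψ : ℝ → ℝ} (hψ : Continuous ψ)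
    (hψ_pos : ∀ x, 0 < ψ x) (hg : ∀ s, HasDerivAt g (ψ (g s)) s) : Tendsto g atTop atTop := by
  have hmono : StrictMono g := strictMono_of_hasDerivAt_pos hg fun s => hψ_pos (g s)
  refine tendsto_atTop_atTop_of_monotone hmono.monotone fun M => ?_
  by_contra! hM
  obtain ⟨x₀, -, hx₀⟩ := (isCompact_Icc (a := g 0) (b := M)).exists_isMinOn
    (Set.nonempty_Icc.2 (hM 0).le) hψ.continuousOn
  set m := ψ x₀
  have hm : 0 < m := hψ_pos x₀
  set w := (M - g 0) / m + 1
  have hw : 0 < w := by have := hM 0; positivity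
  obtain ⟨c, hc, hslope⟩ := exists_hasDerivAt_eq_slope g (fun s => ψ (g s)) hw
    (fun s _ => (hg s).continuousAt.continuousWithinAt) fun s _ => hg s
  have hmc : m ≤ (g w - g 0) / (w - 0) :=
    hslope ▸ hx₀ ⟨(hmono hc.1).le, (hM c).le⟩
  rw [sub_zero, le_div_iff₀ hw] at hmc
  have : M - g 0 < m * w := by
    rw [mul_add, mul_div_cancel₀ _ hm.ne', mul_one]; linarith
  linarith [hM w]

/-- `u w = c w ^ r + o(w ^ r)` as `w → +∞`. -/
def HasPowerAsymptotic (u : ℝ → ℝ) (c r : ℝ) : Prop :=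
  Tendsto (fun w => u w / w ^ r) atTop (𝓝 c)

namespace HasPowerAsymptotic

variable {u v : ℝ → ℝ} {c d r s : ℝ}

lemma congr' (hu : HasPowerAsymptotic u c r) (huv : u =ᶠ[atTop] v) : HasPowerAsymptotic v c r :=
  Tendsto.congr' (huv.mono fun w hw => by rw [hw]) hu

lemma of_tendsto (h : Tendsto u atTop (𝓝 c)) : HasPowerAsymptotic u c 0 := by
  simpa [HasPowerAsymptotic] using h

lemma tendsto (hu : HasPowerAsymptotic u c 0) : Tendsto u atTop (𝓝 c) := by
  simpa [HasPowerAsymptotic] using hu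

lemma tendsto_zero (hu : HasPowerAsymptotic u c r) (hr : r < 0) : Tendsto u atTop (𝓝 0) := by
  have hpow : Tendsto (fun w : ℝ => w ^ r) atTop (𝓝 0) := by
    simpa using tendsto_rpow_neg_atTop (y := -r) (by linarith)
  refine (mul_zero c ▸ Tendsto.mul hu hpow).congr' ?_
  filter_upwards [eventually_gt_atTop 0] with w hw
  exact div_mul_cancel₀ _ (Real.rpow_pos_of_pos hw r).ne'

lemma tendsto_atTop (hu : HasPowerAsymptotic u c r) (hc : 0 < c) (hr : 0 < r) :
    Tendsto u atTop atTop := by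
  refine (Tendsto.pos_mul_atTop hc hu (tendsto_rpow_atTop hr)).congr' ?_
  filter_upwards [eventually_gt_atTop 0] with w hw
  exact div_mul_cancel₀ _ (Real.rpow_pos_of_pos hw r).ne'

lemma const_mul (hu : HasPowerAsymptotic u c r) (e : ℝ) :
    HasPowerAsymptotic (fun w => e * u w) (e * c) r := by
  simpa only [HasPowerAsymptotic, mul_div_assoc] using Tendsto.const_mul e hu

lemma mul (hu : HasPowerAsymptotic u c r) (hv : HasPowerAsymptotic v d s) :
    HasPowerAsymptotic (fun w => u w * v w) (c * d) (r + s) := by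
  refine (Tendsto.mul hu hv).congr' ?_
  filter_upwards [eventually_gt_atTop 0] with w hw
  rw [Real.rpow_add hw, mul_div_mul_comm]

lemma div (hu : HasPowerAsymptotic u c r) (hv : HasPowerAsymptotic v d s) (hd : d ≠ 0) :
    HasPowerAsymptotic (fun w => u w / v w) (c / d) (r - s) := by
  refine (Tendsto.div hu hv hd).congr' ?_
  filter_upwards [eventually_gt_atTop 0] with w hw
  rw [Real.rpow_sub hw, div_div_div_comm]
  rfl

lemma sqrt (hu : HasPowerAsymptotic u c r) :
    HasPowerAsymptotic (fun w => √(u w)) (√c) (r / 2) := by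
  refine ((Real.continuous_sqrt.tendsto c).comp hu).congr' ?_
  filter_upwards [eventually_gt_atTop 0] with w hw
  rw [Function.comp_apply, Real.sqrt_div' _ (Real.rpow_nonneg hw.le r), Real.sqrt_eq_rpow (w ^ r),
    ← Real.rpow_mul hw.le, mul_one_div]

lemma rpow (hu : HasPowerAsymptotic u c r) (hc : 0 < c) (e : ℝ) :
    HasPowerAsymptotic (fun w => u w ^ e) (c ^ e) (r * e) := by
  refine (((Real.continuousAt_rpow_const c e (Or.inl hc.ne')).tendsto).comp hu).congr' ?_
  filter_upwards [eventually_gt_atTop 0, Tendsto.eventually_const_lt hc hu] with w hw hpos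
  have hu_nonneg : 0 ≤ u w :=
    ((div_pos_iff_of_pos_right (Real.rpow_pos_of_pos hw r)).1 hpos).le
  rw [Function.comp_apply, Real.div_rpow hu_nonneg (Real.rpow_nonneg hw.le r),
    ← Real.rpow_mul hw.le]

lemma comp (hu : HasPowerAsymptotic u c r) (hv : HasPowerAsymptotic v d s) (hd : 0 < d)
    (hs : 0 < s) : HasPowerAsymptotic (u ∘ v) (c * d ^ r) (r * s) := by
  have hv_top := hv.tendsto_atTop hd hs
  refine (Tendsto.mul (Tendsto.comp hu hv_top) (hv.rpow hd r)).congr' ?_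
  filter_upwards [hv_top.eventually_gt_atTop 0] with w hw
  rw [Function.comp_apply, mul_comm s r, div_mul_div_cancel₀ (Real.rpow_pos_of_pos hw r).ne']
  rfl

lemma of_hasDerivAt {H h : ℝ → ℝ} {w₀ : ℝ} (hr : -1 < r)
    (hH : ∀ w ≥ w₀, HasDerivAt H (h w) w) (hh : HasPowerAsymptotic h c r) :
    HasPowerAsymptotic H (c / (r + 1)) (r + 1) := by
  have hr1 : r + 1 ≠ 0 := by linarith
  have hG : ∀ w ≥ max w₀ 1,
      HasDerivAt (fun w => H w - c / (r + 1) * w ^ (r + 1)) (h w - c * w ^ r) w := by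
    intro w hw
    have hpow := (Real.hasDerivAt_rpow_const (p := r + 1)
      (Or.inl (one_pos.trans_le ((le_max_right _ _).trans hw)).ne')).const_mul (c / (r + 1))
    refine ((hH w ((le_max_left _ _).trans hw)).sub hpow).congr_deriv ?_
    rw [add_sub_cancel_right, ← mul_assoc, div_mul_cancel₀ _ hr1]
  have hG' : (fun w => h w - c * w ^ r) =o[atTop] (· ^ r) := by
    refine (isLittleO_iff_tendsto' ?_).2 ((sub_self c ▸ Tendsto.sub_const hh c).congr' ?_)
    · filter_upwards [eventually_gt_atTop 0] with w hw h0
      exact absurd h0 (Real.rpow_pos_of_pos hw r).ne'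
    · filter_upwards [eventually_gt_atTop 0] with w hw
      rw [sub_div, mul_div_cancel_right₀ _ (Real.rpow_pos_of_pos hw r).ne']
  refine (zero_add (c / (r + 1)) ▸ ((isLittleO_rpow_add_one_of_hasDerivAt hr hG
    hG').tendsto_div_nhds_zero.add_const (c / (r + 1)))).congr' ?_
  filter_upwards [eventually_gt_atTop 0] with w hw
  rw [sub_div, mul_div_cancel_right₀ _ (Real.rpow_pos_of_pos hw _).ne', sub_add_cancel]

lemma integral {h : ℝ → ℝ} (hh : Continuous h) (hr : -1 < r)
    (hasym : HasPowerAsymptotic h c r) :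
    HasPowerAsymptotic (fun w => ∫ s in (0:ℝ)..w, h s) (c / (r + 1)) (r + 1) :=
  hasym.of_hasDerivAt (w₀ := 0) hr fun w _ => (hh.integral_hasStrictDerivAt 0 w).hasDerivAt

lemma of_hasDerivAt_one_div_sqrt {a g : ℝ → ℝ} {k aInf : ℝ}
    (ha : Continuous a) (ha_pos : ∀ x, 0 < a x) (hk : -2 < k) (haInf : 0 < aInf)
    (haAsym : HasPowerAsymptotic a aInf k) (hg : ∀ s, HasDerivAt g (1 / √(a (g s))) s) :
    HasPowerAsymptotic g (((k + 2) / (2 * √aInf)) ^ (2 / (k + 2))) (2 / (k + 2)) := by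
  have hg_top : Tendsto g atTop atTop :=
    tendsto_atTop_of_hasDerivAt_comp_s19 (ψ := fun x => 1 / √(a x))
      (continuous_const.div ha.sqrt fun x => (Real.sqrt_pos.2 (ha_pos x)).ne')
      (fun x => one_div_pos.2 (Real.sqrt_pos.2 (ha_pos x))) hg
  obtain ⟨w₀, hw₀⟩ := eventually_atTop.1 (hg_top.eventually_gt_atTop 0)
  have hk2 : 0 < (k + 2) / 2 := by linarith
  have hφ : ∀ w ≥ w₀, HasDerivAt (fun w => g w ^ ((k + 2) / 2))
      ((k + 2) / 2 / √(a (g w) / g w ^ k)) w := by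
    intro w hw
    have hgw := hw₀ w hw
    refine ((Real.hasDerivAt_rpow_const (p := (k + 2) / 2) (Or.inl hgw.ne')).comp w
      (hg w)).congr_deriv ?_
    rw [Real.sqrt_div' _ (Real.rpow_nonneg hgw.le k), Real.sqrt_eq_rpow (g w ^ k),
      ← Real.rpow_mul hgw.le, show (k + 2) / 2 - 1 = k * (1 / 2) by ring]
    have := Real.sqrt_pos.2 (ha_pos (g w))
    field_simp
  have hφ' : HasPowerAsymptotic (fun w => (k + 2) / 2 / √(a (g w) / g w ^ k))
      ((k + 2) / 2 / √aInf) 0 :=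
    .of_tendsto (tendsto_const_nhds.div (Tendsto.sqrt (Tendsto.comp haAsym hg_top))
      (Real.sqrt_pos.2 haInf).ne')
  have hgφ := ((hφ'.of_hasDerivAt (by norm_num) hφ).rpow
    (div_pos (div_pos hk2 (Real.sqrt_pos.2 haInf)) (by norm_num)) (2 / (k + 2)))
  rw [zero_add, div_one, one_mul, div_div] at hgφ
  refine hgφ.congr' ?_
  filter_upwards [eventually_ge_atTop w₀] with w hw
  rw [← Real.rpow_mul (hw₀ w hw).le, ← one_div_div (k + 2) 2, mul_one_div_cancel hk2.ne',
    Real.rpow_one]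

end HasPowerAsymptotic

lemma limit_constant_eq {k p aInf fInf gInf T : ℝ} (hk : -2 < k) (hp : -1 < p)
    (haInf : 0 < aInf) (hfInf : 0 < fInf) (hgInf : 0 < gInf)
    (hgInf_pow : gInf ^ ((k + 2) / 2) = (k + 2) / (2 * √aInf)) (hT : T ≠ 0) :
    fInf * gInf ^ p * (1 / √(aInf * gInf ^ k)) / T
      * (T / ((p + 1) * (2 / (k + 2)) / 2 + 1) / (fInf / (p + 1) * gInf ^ (p + 1)))
      = 2 * (p + 1) / (p + k + 3) := by
  have hk2 : k + 2 ≠ 0 := by linarith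
  have hp1 : p + 1 ≠ 0 := by linarith
  have hpk : p + k + 3 ≠ 0 := by linarith
  have hsqrt : 0 < √aInf := Real.sqrt_pos.2 haInf
  have hchar : √aInf * gInf ^ (k / 2) * gInf = (k + 2) / 2 := by
    rw [mul_assoc, ← Real.rpow_add_one hgInf.ne', show k / 2 + 1 = (k + 2) / 2 by ring,
      hgInf_pow]
    field_simp
  rw [Real.sqrt_mul haInf.le, Real.sqrt_eq_rpow (gInf ^ k), ← Real.rpow_mul hgInf.le,
    Real.rpow_add_one hgInf.ne']
  field_simp
  rw [show p + 1 + (k + 2) = p + k + 3 by ring, mul_div_cancel_right₀ _ hpk]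
  linear_combination (-2) * hchar

theorem stmt_19_general (a f g : ℝ → ℝ) (ha : ContDiff ℝ 1 a) (ν : ℝ) (hν : 0 < ν)
    (hab : ∀ s, ν ≤ a s) (hf : ContDiff ℝ 1 f)
    (hg : ∀ s, HasDerivAt g (1 / Real.sqrt (a (g s))) s)
    (k p aInf fInf : ℝ) (hk : 0 < k) (hp : k + 1 < p)
    (haInf : 0 < aInf) (hfInf : 0 < fInf)
    (haAsym : Tendsto (fun s => a s / s ^ k) atTop (𝓝 aInf))
    (hfAsym : Tendsto (fun s => f s / s ^ p) atTop (𝓝 fInf))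
    (F : ℝ → ℝ) (hF : ∀ t, F t = ∫ τ in (0:ℝ)..t, f τ)
    (B Λ : ℝ → ℝ)
    (hB : ∀ w, B w = f (g w) * deriv g w / Real.sqrt (2 * F (g w)))
    (hΛ : ∀ w, Λ w = (∫ s in (0:ℝ)..w, Real.sqrt (2 * F (g s))) / F (g w)) :
    Tendsto (fun w => B w * Λ w) atTop (𝓝 (2 * (p + 1) / (p + k + 3))) ∧
    Tendsto Λ atTop (𝓝 0) := by
  have hk2 : k + 2 ≠ 0 := by linarith
  have hp1 : 0 < p + 1 := by linarith
  set γ := 2 / (k + 2)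
  set gInf := ((k + 2) / (2 * √aInf)) ^ γ
  set C := fInf / (p + 1) * gInf ^ (p + 1)
  have hγ : 0 < γ := by positivity
  have hgInf : 0 < gInf := by positivity
  have hC : 0 < C := by positivity
  have hα : 2 < (p + 1) * γ := by
    rw [mul_div_assoc', lt_div_iff₀ (by linarith)]; linarith
  have hg_asym : HasPowerAsymptotic g gInf γ :=
    .of_hasDerivAt_one_div_sqrt ha.continuous (fun x => hν.trans_le (hab x)) (by linarith)
      haInf haAsym hg
  have hF_cont : Continuous F := by
    rw [funext hF]
    exact intervalIntegral.continuous_primitive (fun _ _ => hf.continuous.intervalIntegrable _ _) 0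
  have hFg : HasPowerAsymptotic (F ∘ g) C ((p + 1) * γ) := by
    refine HasPowerAsymptotic.comp ?_ hg_asym hgInf hγ
    rw [funext hF]
    exact HasPowerAsymptotic.integral hf.continuous (by linarith) hfAsym
  have hΛ_asym : HasPowerAsymptotic Λ (√(2 * C) / ((p + 1) * γ / 2 + 1) / C)
      ((p + 1) * γ / 2 + 1 - (p + 1) * γ) := by
    rw [funext hΛ]
    have : Continuous g := continuous_iff_continuousAt.2 fun s => (hg s).continuousAt
    exact (HasPowerAsymptotic.integral (by fun_prop) (by linarith)
      (hFg.const_mul 2).sqrt).div hFg hC.ne'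
  have hB_asym : HasPowerAsymptotic B (fInf * gInf ^ p * (1 / √(aInf * gInf ^ k)) / √(2 * C))
      (p * γ + (0 - k * γ / 2) - (p + 1) * γ / 2) := by
    have hB' : B = fun w => f (g w) * (1 / √(a (g w))) / √(2 * F (g w)) :=
      funext fun w => by rw [hB w, (hg w).deriv]
    rw [hB']
    exact ((HasPowerAsymptotic.comp hfAsym hg_asym hgInf hγ).mul
      ((HasPowerAsymptotic.of_tendsto tendsto_const_nhds).div
        (HasPowerAsymptotic.comp haAsym hg_asym hgInf hγ).sqrt (by positivity))).div
      (hFg.const_mul 2).sqrt (by positivity)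
  have hexp : p * γ + (0 - k * γ / 2) - (p + 1) * γ / 2 + ((p + 1) * γ / 2 + 1 - (p + 1) * γ)
      = 0 := by
    simp only [γ]; field_simp; ring
  have hgInf_pow : gInf ^ ((k + 2) / 2) = (k + 2) / (2 * √aInf) := by
    rw [← Real.rpow_mul (by positivity), show 2 / (k + 2) * ((k + 2) / 2) = 1 by field_simp,
      Real.rpow_one]
  refine ⟨?_, hΛ_asym.tendsto_zero (by linarith)⟩
  rw [← limit_constant_eq (by linarith) (by linarith) haInf hfInf hgInf hgInf_pow
    (Real.sqrt_pos.2 (by linarith : 0 < 2 * C)).ne']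
  exact (hexp ▸ hB_asym.mul hΛ_asym).tendsto

theorem stmt_19 (a f g : ℝ → ℝ) (ha : ContDiff ℝ 1 a) (ν : ℝ) (hν : 0 < ν)
    (hab : ∀ s, ν ≤ a s) (hf : ContDiff ℝ 1 f)
    (hf0 : ∀ s ≤ (0:ℝ), f s = 0) (hfpos : ∀ s > (0:ℝ), 0 < f s)
    (hg : ∀ s, HasDerivAt g (1 / Real.sqrt (a (g s))) s) (hg0 : g 0 = 0)
    (k p aInf fInf : ℝ) (hk : 0 < k) (hp : k + 1 < p)
    (haInf : 0 < aInf) (hfInf : 0 < fInf)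
    (haAsym : Tendsto (fun s => a s / s ^ k) atTop (𝓝 aInf))
    (hfAsym : Tendsto (fun s => f s / s ^ p) atTop (𝓝 fInf))
    (F : ℝ → ℝ) (hF : ∀ t, F t = ∫ τ in (0:ℝ)..t, f τ)
    (B Λ : ℝ → ℝ)
    (hB : ∀ w, B w = f (g w) * deriv g w / Real.sqrt (2 * F (g w)))
    (hΛ : ∀ w, Λ w = (∫ s in (0:ℝ)..w, Real.sqrt (2 * F (g s))) / F (g w)) :
    Tendsto (fun w => B w * Λ w) atTop (𝓝 (2 * (p + 1) / (p + k + 3))) ∧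
    Tendsto Λ atTop (𝓝 0) :=
  stmt_19_general a f g ha ν hν hab hf hg k p aInf fInf hk hp haInf hfInf haAsym hfAsym F hF B Λ hB
    hΛ
end
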